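/- arXiv:2512.06585 — 12 statements merged into one kernel-verified Lean document; each statement's English description precedes it below -/
import Mathlib

section
/- Let M be a finite set of items and let v : 2^M → ℝ≥0 be an XOS valuation, i.e. there is a nonempty finite collection C of nonnegative weight functions c : M → ℝ≥0 such that v(S) = max_{c∈C} Σ_{j∈S} c(j) for every S ⊆ M. Let T ⊆ M, let p ∈ [0,1], and let S be a random subset of M, defined on some probability space, such that Pr[j ∈ S] ≥ p for every j ∈ T (the events {j ∈ S} need not be independent). Then E[v(S)] ≥ p · v(T). -/
/-!
Pick a clause `c ∈ C` attaining `v T`. Then `v (S ω) ≥ ∑_{j ∈ T ∩ S ω} c j` pointwise, and by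
linearity of expectation the right-hand side has mean `∑_{j ∈ T} Pr[j ∈ S] c j ≥ p ∑_{j ∈ T} c j`.
Only the marginals `Pr[j ∈ S]` enter, which is why no independence is needed.
-/

open MeasureTheory

theorem Finset.sum_inter_eq_sum_indicator {M Ω : Type*} [DecidableEq M] (S : Ω → Finset M)
    (c : M → ℝ) (T : Finset M) (ω : Ω) :
    ∑ j ∈ T ∩ S ω, c j = ∑ j ∈ T, {ω | j ∈ S ω}.indicator (fun _ => c j) ω := by
  simp only [Set.indicator, Set.mem_ofPred_eq, Finset.sum_ite_mem]

section RandomSet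

variable {M Ω : Type*} [MeasurableSpace Ω] (μ : Measure Ω) [IsFiniteMeasure μ]

theorem integrable_comp_of_finite [Finite M] (S : Ω → Finset M) {f : Finset M → ℝ}
    (hf : Measurable fun ω => f (S ω)) : Integrable (fun ω => f (S ω)) μ := by
  obtain ⟨B, hB⟩ := Finite.exists_le fun A : Finset M => ‖f A‖
  exact .of_bound hf.aestronglyMeasurable B (.of_forall fun ω => hB (S ω))

variable [DecidableEq M] {S : Ω → Finset M}

theorem integrable_sum_inter (hmeas : ∀ j, MeasurableSet {ω | j ∈ S ω}) (c : M → ℝ)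
    (T : Finset M) : Integrable (fun ω => ∑ j ∈ T ∩ S ω, c j) μ := by
  simp_rw [Finset.sum_inter_eq_sum_indicator S c T]
  exact integrable_finsetSum T fun j _ => (integrable_const (c j)).indicator (hmeas j)

theorem integral_sum_inter_eq_sum_measureReal (hmeas : ∀ j, MeasurableSet {ω | j ∈ S ω})
    (c : M → ℝ) (T : Finset M) :
    ∫ ω, ∑ j ∈ T ∩ S ω, c j ∂μ = ∑ j ∈ T, μ.real {ω | j ∈ S ω} * c j := by
  simp_rw [Finset.sum_inter_eq_sum_indicator S c T]
  rw [integral_finsetSum T fun j _ => (integrable_const (c j)).indicator (hmeas j)]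
  refine Finset.sum_congr rfl fun j _ => ?_
  rw [integral_indicator_const _ (hmeas j), smul_eq_mul]

end RandomSet

theorem Finset.sum_inter_le_sup' {M : Type*} [DecidableEq M] (C : Finset (M → ℝ))
    (hC : C.Nonempty) {c : M → ℝ} (hcC : c ∈ C) (hc : ∀ j, 0 ≤ c j) (T A : Finset M) :
    ∑ j ∈ T ∩ A, c j ≤ C.sup' hC fun c => ∑ j ∈ A, c j :=
  calc ∑ j ∈ T ∩ A, c j ≤ ∑ j ∈ A, c j :=
        Finset.sum_le_sum_of_subset_of_nonneg Finset.inter_subset_right fun j _ _ => hc j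
    _ ≤ C.sup' hC fun c => ∑ j ∈ A, c j := Finset.le_sup' (fun c => ∑ j ∈ A, c j) hcC

theorem xos_fractional_coverage_general
    {M : Type*} [Fintype M] [DecidableEq M]
    (v : Finset M → ℝ) (C : Finset (M → ℝ)) (hC : C.Nonempty)
    (hCnonneg : ∀ c ∈ C, ∀ j : M, 0 ≤ c j)
    (hv : ∀ S : Finset M, v S = C.sup' hC (fun c => ∑ j ∈ S, c j))
    {Ω : Type*} [MeasurableSpace Ω] (μ : Measure Ω) [IsProbabilityMeasure μ]
    (S : Ω → Finset M)
    (hmeas : ∀ j : M, MeasurableSet {ω | j ∈ S ω})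
    (hmeasv : Measurable (fun ω => v (S ω)))
    (T : Finset M) (p : ℝ)
    (hprob : ∀ j ∈ T, p ≤ (μ {ω | j ∈ S ω}).toReal) :
    p * v T ≤ ∫ ω, v (S ω) ∂μ := by
  obtain ⟨c, hcC, hvT⟩ := C.exists_mem_eq_sup' hC fun c => ∑ j ∈ T, c j
  have hc := hCnonneg c hcC
  calc p * v T = ∑ j ∈ T, p * c j := by rw [hv, hvT, Finset.mul_sum]
    _ ≤ ∑ j ∈ T, μ.real {ω | j ∈ S ω} * c j :=
        Finset.sum_le_sum fun j hj => mul_le_mul_of_nonneg_right (hprob j hj) (hc j)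
    _ = ∫ ω, ∑ j ∈ T ∩ S ω, c j ∂μ := (integral_sum_inter_eq_sum_measureReal μ hmeas c T).symm
    _ ≤ ∫ ω, v (S ω) ∂μ := by
        refine integral_mono (integrable_sum_inter μ hmeas c T)
          (integrable_comp_of_finite μ S hmeasv) fun ω => ?_
        simpa only [hv] using Finset.sum_inter_le_sup' C hC hcC hc T (S ω)

/-- If `v` is an XOS valuation on a finite item set `M` (a pointwise maximum of a nonempty
finite collection of nonnegative additive functions) and `S` is a random subset of `M`
(on an arbitrary probability space, with no independence assumption) such that each item
`j ∈ T` belongs to `S` with probability at least `p`, then `E[v(S)] ≥ p · v(T)`. -/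
theorem xos_fractional_coverage
    {M : Type*} [Fintype M] [DecidableEq M]
    (v : Finset M → ℝ) (C : Finset (M → ℝ)) (hC : C.Nonempty)
    (hCnonneg : ∀ c ∈ C, ∀ j : M, 0 ≤ c j)
    (hv : ∀ S : Finset M, v S = C.sup' hC (fun c => ∑ j ∈ S, c j))
    {Ω : Type*} [MeasurableSpace Ω] (μ : Measure Ω) [IsProbabilityMeasure μ]
    (S : Ω → Finset M)
    (hmeas : ∀ j : M, MeasurableSet {ω | j ∈ S ω})
    (hmeasv : Measurable (fun ω => v (S ω)))
    (T : Finset M) (p : ℝ) (hp0 : 0 ≤ p) (hp1 : p ≤ 1)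
    (hprob : ∀ j ∈ T, p ≤ (μ {ω | j ∈ S ω}).toReal) :
    p * v T ≤ ∫ ω, v (S ω) ∂μ :=
  xos_fractional_coverage_general v C hC hCnonneg hv μ S hmeas hmeasv T p hprob
end

section
/- There exist universal constants κ > 0 and C > 0 such that for all positive integers n and c with c ≥ C·n the following holds. Set ε = n^{-1/3}. For every integer z with n ≤ z ≤ 2^{κ·c/n} there exist subsets S_1, …, S_z of [c], each of size ⌊εc⌋, such that for every subset S ⊆ [c] and every L ⊆ [z] with |L| = n, Σ_{ℓ∈L} |S ∩ S_ℓ| ≤ (|S|/c + 3ε) · ε n c. -/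
/-!
Split `[c]` into `w = ⌊εc⌋` blocks of size `q = ⌊c / w⌋ ≈ 1/ε` and let every `S_ℓ` pick one
uniformly random point in each block. For fixed `L`, if `N(i, b)` is the number of `ℓ ∈ L` picking
the point `b` of block `i`, then `∑_{ℓ ∈ L} |S ∩ S_ℓ| = ∑_{(i, b) ∈ S} N(i, b) ≤ θ |S| + E`
with `θ = εn` and the excess `E = ∑_{i, b} (N(i, b) - θ)⁺`. Each `N(i, b)` is binomial with
variance at most `n / q`, which bounds the mean of `E` by `2ε²nc`; changing one choice of one
row of `L` moves `E` by at most `1`, so by McDiarmid's inequality `E ≥ 3ε²nc` has probability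
at most `e^{-c/4}`. A union bound over the at most `z^n ≤ 2^{c/4}` sets `L` leaves a good choice.
-/

open Finset Function Real
open scoped BigOperators

section BoundedDifferences

variable {A : Type*} [Fintype A]

/-- Hoeffding's lemma for the uniform distribution on a finite type. -/
theorem expect_exp_le_of_abs_sub_le [Nonempty A] (φ : A → ℝ) {t c : ℝ} (ht : 0 ≤ t)
    (htc : t * c ≤ 1) (hφ : ∀ a b, |φ a - φ b| ≤ c) :
    𝔼 a, exp (t * φ a) ≤ exp (t * 𝔼 a, φ a + t ^ 2 * c ^ 2) := by
  set m := 𝔼 a, φ a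
  have hdev : ∀ a, |φ a - m| ≤ c := fun a => by
    have : φ a - m = 𝔼 b, (φ a - φ b) := by
      rw [Finset.expect_sub_distrib, Fintype.expect_const]
    rw [this]
    exact (Finset.abs_expect_le _ _).trans (Finset.expect_le univ_nonempty fun b _ => hφ a b)
  have hpoint : ∀ a, exp (t * φ a) ≤ exp (t * m) * (1 + t * (φ a - m) + t ^ 2 * c ^ 2) := by
    intro a
    have hsmall : |t * (φ a - m)| ≤ t * c := by
      rw [abs_mul, abs_of_nonneg ht]; exact mul_le_mul_of_nonneg_left (hdev a) ht
    have hsq : (t * (φ a - m)) ^ 2 ≤ t ^ 2 * c ^ 2 := by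
      rw [← mul_pow]; exact sq_le_sq' (abs_le.1 hsmall).1 (abs_le.1 hsmall).2
    have := (abs_le.1 (abs_exp_sub_one_sub_id_le (hsmall.trans htc))).2
    calc exp (t * φ a) = exp (t * m) * exp (t * (φ a - m)) := by rw [← exp_add]; ring_nf
      _ ≤ exp (t * m) * (1 + t * (φ a - m) + t ^ 2 * c ^ 2) := by gcongr; linarith
  calc 𝔼 a, exp (t * φ a)
      ≤ 𝔼 a, exp (t * m) * (1 + t * (φ a - m) + t ^ 2 * c ^ 2) :=
        Finset.expect_le_expect fun a _ => hpoint a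
    _ = exp (t * m) * (1 + t ^ 2 * c ^ 2) := by
        rw [← Finset.mul_expect, Finset.expect_add_distrib, Finset.expect_add_distrib,
          ← Finset.mul_expect, Finset.expect_sub_distrib]
        simp [m]
    _ ≤ exp (t * m) * exp (t ^ 2 * c ^ 2) := by
        gcongr; linarith [add_one_le_exp (t ^ 2 * c ^ 2)]
    _ = exp (t * m + t ^ 2 * c ^ 2) := (exp_add _ _).symm

theorem expect_pi_fin_succ {m : ℕ} (F : (Fin (m + 1) → A) → ℝ) :
    𝔼 x, F x = 𝔼 y : Fin m → A, 𝔼 a, F (Fin.cons a y) := by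
  rw [← Fintype.expect_equiv (Fin.consEquiv fun _ => A) (fun p => F (Fin.cons p.1 p.2)) F
    fun _ => rfl, ← Finset.univ_product_univ,
    Finset.expect_product' univ univ fun a y => F (Fin.cons a y), Finset.expect_comm]

def HasBoundedDifferences {K : Type*} [DecidableEq K] (f : (K → A) → ℝ) (c : K → ℝ) : Prop :=
  ∀ x k a, |f (update x k a) - f x| ≤ c k

/-- McDiarmid's martingale argument: average out the first coordinate, apply Hoeffding's lemma
on each fibre and induct on the remaining coordinates. -/
theorem expect_exp_le_of_hasBoundedDifferences_fin [Nonempty A] {t : ℝ} (ht : 0 ≤ t) :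
    ∀ {m : ℕ} (f : (Fin m → A) → ℝ) (c : Fin m → ℝ), (∀ k, t * c k ≤ 1) →
      HasBoundedDifferences f c →
      𝔼 x, exp (t * f x) ≤ exp (t * 𝔼 x, f x + t ^ 2 * ∑ k, c k ^ 2)
  | 0, f, c, _, _ => by simp
  | m + 1, f, c, htc, hf => by
    set g : (Fin m → A) → ℝ := fun y => 𝔼 a, f (Fin.cons a y)
    have hfiber : ∀ y, 𝔼 a, exp (t * f (Fin.cons a y)) ≤ exp (t * g y + t ^ 2 * c 0 ^ 2) :=
      fun y => expect_exp_le_of_abs_sub_le _ ht (htc 0) fun a b => by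
        simpa [Fin.update_cons_zero] using hf (Fin.cons b y) 0 a
    have hg : HasBoundedDifferences g (fun k => c k.succ) := fun y k b => by
      simp only [g, ← Finset.expect_sub_distrib]
      refine (Finset.abs_expect_le _ _).trans (Finset.expect_le univ_nonempty fun a _ => ?_)
      simpa [Fin.cons_update] using hf (Fin.cons a y) k.succ b
    have ih := expect_exp_le_of_hasBoundedDifferences_fin ht g _ (fun k => htc k.succ) hg
    calc 𝔼 x, exp (t * f x) = 𝔼 y, 𝔼 a, exp (t * f (Fin.cons a y)) := expect_pi_fin_succ _
      _ ≤ 𝔼 y, exp (t ^ 2 * c 0 ^ 2) * exp (t * g y) :=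
          Finset.expect_le_expect fun y _ => (hfiber y).trans_eq (by rw [← exp_add, add_comm])
      _ ≤ exp (t ^ 2 * c 0 ^ 2) * exp (t * 𝔼 y, g y + t ^ 2 * ∑ k : Fin m, c k.succ ^ 2) := by
          rw [← Finset.mul_expect]; gcongr
      _ = exp (t * 𝔼 x, f x + t ^ 2 * ∑ k, c k ^ 2) := by
          rw [← exp_add, show 𝔼 x, f x = 𝔼 y, g y from expect_pi_fin_succ f, Fin.sum_univ_succ]
          ring_nf

variable {K : Type*} [Fintype K] [DecidableEq K] [Nonempty A] {f : (K → A) → ℝ} {c : K → ℝ} {t : ℝ}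

theorem expect_exp_le_of_hasBoundedDifferences (ht : 0 ≤ t) (htc : ∀ k, t * c k ≤ 1)
    (hf : HasBoundedDifferences f c) :
    𝔼 x, exp (t * f x) ≤ exp (t * 𝔼 x, f x + t ^ 2 * ∑ k, c k ^ 2) := by
  set e := Fintype.equivFin K
  have hcomp : ∀ F : (K → A) → ℝ, 𝔼 y : Fin (Fintype.card K) → A, F (y ∘ e) = 𝔼 x, F x :=
    fun F => Fintype.expect_equiv (e.arrowCongr (Equiv.refl A)).symm _ _ fun _ => rfl
  have hf' : HasBoundedDifferences (fun y => f (y ∘ e)) (fun k => c (e.symm k)) :=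
    fun y k a => by simpa only [update_comp_equiv] using hf (y ∘ e) (e.symm k) a
  have := expect_exp_le_of_hasBoundedDifferences_fin ht _ _ (fun k => htc (e.symm k)) hf'
  rwa [hcomp (fun x => exp (t * f x)), hcomp f, e.symm.sum_comp (fun k => c k ^ 2)] at this

theorem expect_indicator_le_of_hasBoundedDifferences (ht : 0 ≤ t) (htc : ∀ k, t * c k ≤ 1)
    (hf : HasBoundedDifferences f c) (B : ℝ) :
    𝔼 x, (if B ≤ f x then (1 : ℝ) else 0) ≤ exp (t * 𝔼 x, f x + t ^ 2 * ∑ k, c k ^ 2 - t * B) := by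
  have hpoint : ∀ x, (if B ≤ f x then (1 : ℝ) else 0) ≤ exp (t * f x) * exp (-(t * B)) := by
    intro x
    rw [← exp_add]
    split_ifs with hB
    · exact one_le_exp (by nlinarith)
    · exact (exp_pos _).le
  calc 𝔼 x, (if B ≤ f x then (1 : ℝ) else 0) ≤ 𝔼 x, exp (t * f x) * exp (-(t * B)) :=
        Finset.expect_le_expect fun x _ => hpoint x
    _ ≤ exp (t * 𝔼 x, f x + t ^ 2 * ∑ k, c k ^ 2) * exp (-(t * B)) := by
        rw [← Finset.expect_mul]; gcongr; exact expect_exp_le_of_hasBoundedDifferences ht htc hf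
    _ = exp (t * 𝔼 x, f x + t ^ 2 * ∑ k, c k ^ 2 - t * B) := by rw [← exp_add, sub_eq_add_neg]

end BoundedDifferences

theorem exists_forall_not_of_sum_expect_lt_one {Ω κ : Type*} [Fintype Ω] [Nonempty Ω]
    (s : Finset κ) (P : κ → Ω → Prop) [∀ L, DecidablePred (P L)]
    (h : ∑ L ∈ s, 𝔼 x, (if P L x then (1 : ℝ) else 0) < 1) : ∃ x, ∀ L ∈ s, ¬ P L x := by
  rw [← Finset.expect_sum_comm] at h
  obtain ⟨x, -, hx⟩ := Finset.exists_lt_of_expect_lt univ_nonempty h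
  refine ⟨x, fun L hL hP => hx.not_ge ?_⟩
  calc (1 : ℝ) = if P L x then 1 else 0 := (if_pos hP).symm
    _ ≤ ∑ L ∈ s, if P L x then (1 : ℝ) else 0 :=
        Finset.single_le_sum (f := fun L => if P L x then (1 : ℝ) else 0)
          (fun L _ => by positivity) hL

section Orthogonality

variable {K A : Type*} [Fintype K] [DecidableEq K] [Fintype A] [Nonempty A]

theorem expect_pi_prod_apply (s : Finset K) (Φ : K → A → ℝ) :
    𝔼 x : K → A, ∏ u ∈ s, Φ u (x u) = ∏ u ∈ s, 𝔼 a, Φ u a := by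
  set Ψ : K → A → ℝ := fun u a => if u ∈ s then Φ u a else 1
  have hΨ : 𝔼 x : K → A, ∏ u, Ψ u (x u) = ∏ u, 𝔼 a, Ψ u a := by
    simp only [Fintype.expect_eq_sum_div_card, ← Fintype.prod_sum, Fintype.card_fun,
      Finset.prod_div_distrib, Finset.prod_const, Finset.card_univ, Nat.cast_pow]
  have hexp : ∀ u, 𝔼 a, Ψ u a = if u ∈ s then 𝔼 a, Φ u a else 1 := fun u => by
    by_cases hu : u ∈ s <;> simp [Ψ, hu]
  simpa only [hexp, Ψ, apply_ite (fun F : A → ℝ => F _), Fintype.prod_ite_mem] using hΨ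

theorem expect_pi_apply (g : A → ℝ) (k : K) : 𝔼 x : K → A, g (x k) = 𝔼 a, g a := by
  simpa using expect_pi_prod_apply {k} fun _ => g

theorem expect_pi_mul_apply {k k' : K} (hk : k ≠ k') (g g' : A → ℝ) :
    𝔼 x : K → A, g (x k) * g' (x k') = (𝔼 a, g a) * 𝔼 a, g' a := by
  simpa [Finset.prod_pair hk, hk.symm] using
    expect_pi_prod_apply {k, k'} fun u => if u = k then g else g'

theorem expect_pi_sq_sum_apply {φ : A → ℝ} (hφ : 𝔼 a, φ a = 0) (s : Finset K) :
    𝔼 x : K → A, (∑ k ∈ s, φ (x k)) ^ 2 = #s * 𝔼 a, φ a ^ 2 := by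
  have hpair : ∀ k k', 𝔼 x : K → A, φ (x k) * φ (x k') = if k = k' then 𝔼 a, φ a ^ 2 else 0 := by
    intro k k'
    split_ifs with h
    · subst h; simpa only [← sq] using expect_pi_apply (fun a => φ a ^ 2) k
    · rw [expect_pi_mul_apply h, hφ, zero_mul]
  simp only [sq, Finset.sum_mul_sum, Finset.expect_sum_comm, hpair]
  rw [Finset.sum_comm]
  simp

end Orthogonality

theorem max_sub_le_sq_div_add (N μ θ : ℝ) {s : ℝ} (hs : 0 < s) :
    max (N - θ) 0 ≤ (N - μ) ^ 2 / (2 * s) + s / 2 + max (μ - θ) 0 := by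
  have hamgm : N - μ ≤ (N - μ) ^ 2 / (2 * s) + s / 2 := by
    rw [div_add_div _ _ (by positivity) two_ne_zero, le_div_iff₀ (by positivity)]
    nlinarith [sq_nonneg (N - μ - s)]
  refine max_le ?_ (by positivity)
  linarith [le_max_left (μ - θ) 0]

section Excess

variable {ι β A : Type*} [DecidableEq A]

/-- `x (ℓ, i)` is the point that row `ℓ` picks in block `i`. -/
def load (x : ι × β → A) (L : Finset ι) (p : β × A) : ℕ := #{ℓ ∈ L | x (ℓ, p.1) = p.2}

theorem load_update_le [DecidableEq ι] [DecidableEq β] (x : ι × β → A) (L : Finset ι)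
    (k : ι × β) (a : A) (p : β × A) :
    load (update x k a) L p ≤ load x L p + if k.1 ∈ L ∧ p = (k.2, a) then 1 else 0 := by
  unfold load
  split_ifs with hk
  · refine (Finset.card_le_card fun ℓ hℓ => ?_).trans (Finset.card_insert_le k.1 _)
    rw [Finset.mem_filter] at hℓ
    rw [Finset.mem_insert, Finset.mem_filter]
    by_cases hℓk : (ℓ, p.1) = k
    · exact Or.inl (congrArg Prod.fst hℓk)
    · exact Or.inr ⟨hℓ.1, by rw [← hℓ.2, update_of_ne hℓk]⟩
  · refine Finset.card_le_card fun ℓ hℓ => ?_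
    rw [Finset.mem_filter] at hℓ ⊢
    refine ⟨hℓ.1, ?_⟩
    by_cases hℓk : (ℓ, p.1) = k
    · subst hℓk
      rw [update_self] at hℓ
      exact absurd ⟨hℓ.1, Prod.ext rfl hℓ.2.symm⟩ hk
    · rw [← hℓ.2, update_of_ne hℓk]

variable [Fintype β] [Fintype A]

def excess (x : ι × β → A) (L : Finset ι) (θ : ℝ) : ℝ := ∑ p, max ((load x L p : ℝ) - θ) 0

variable [DecidableEq ι] [DecidableEq β]

theorem excess_update_le (x : ι × β → A) (L : Finset ι) (θ : ℝ) (k : ι × β) (a : A) :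
    excess (update x k a) L θ ≤ excess x L θ + if k.1 ∈ L then 1 else 0 := by
  have hpoint : ∀ p, max ((load (update x k a) L p : ℝ) - θ) 0
      ≤ max ((load x L p : ℝ) - θ) 0 + if k.1 ∈ L ∧ p = (k.2, a) then 1 else 0 := by
    intro p
    have h : (load (update x k a) L p : ℝ)
        ≤ load x L p + if k.1 ∈ L ∧ p = (k.2, a) then 1 else 0 := by
      exact_mod_cast load_update_le x L k a p
    refine max_le ?_ (by positivity)
    linarith [le_max_left ((load x L p : ℝ) - θ) 0]
  calc excess (update x k a) L θ
      ≤ ∑ p, (max ((load x L p : ℝ) - θ) 0 + if k.1 ∈ L ∧ p = (k.2, a) then 1 else 0) :=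
        Finset.sum_le_sum fun p _ => hpoint p
    _ = excess x L θ + if k.1 ∈ L then 1 else 0 := by
        rw [Finset.sum_add_distrib, excess]
        by_cases hk : k.1 ∈ L <;> simp [hk]

theorem hasBoundedDifferences_excess (L : Finset ι) (θ : ℝ) :
    HasBoundedDifferences (fun x : ι × β → A => excess x L θ)
      (fun k => if k.1 ∈ L then 1 else 0) := fun x k a => by
  have h := excess_update_le (update x k a) L θ k (x k)
  rw [update_idem, update_eq_self] at h
  exact abs_sub_le_iff.2 ⟨by linarith [excess_update_le x L θ k a], by linarith⟩

variable [Fintype ι] [Nonempty A]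

theorem expect_sq_load_sub_le (L : Finset ι) (p : β × A) :
    𝔼 x : ι × β → A, ((load x L p : ℝ) - #L / Fintype.card A) ^ 2 ≤ #L / Fintype.card A := by
  set q : ℝ := (Fintype.card A : ℝ)
  set φ : A → ℝ := fun a => (if a = p.2 then 1 else 0) - 1 / q
  have hq : 0 < q := by positivity
  have hsum : ∀ x : ι × β → A,
      (load x L p : ℝ) - #L / q = ∑ k ∈ L.map (Embedding.sectL ι p.1), φ (x k) := by
    intro x
    rw [Finset.sum_map, Finset.sum_sub_distrib, Finset.sum_boole, Finset.sum_const, nsmul_eq_mul,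
      load, mul_one_div]
    rfl
  have hφ : 𝔼 a, φ a = 0 := by
    simp [φ, Fintype.expect_eq_sum_div_card, Finset.sum_sub_distrib, q]
  have hφ2 : 𝔼 a, φ a ^ 2 ≤ 1 / q := by
    have : ∀ a, φ a ^ 2 = (1 - 2 / q) * (if a = p.2 then 1 else 0) + 1 / q ^ 2 := fun a => by
      by_cases h : a = p.2
      · simp [φ, h]; ring
      · simp [φ, h]
    simp only [this, Fintype.expect_eq_sum_div_card, Finset.sum_add_distrib, ← Finset.mul_sum,
      Finset.sum_ite_eq', Finset.mem_univ, if_true, Finset.sum_const, Finset.card_univ,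
      nsmul_eq_mul]
    rw [div_le_div_iff₀ hq hq]
    field_simp
    nlinarith
  simp only [hsum, expect_pi_sq_sum_apply hφ, Finset.card_map]
  calc (#L : ℝ) * 𝔼 a, φ a ^ 2 ≤ #L * (1 / q) := by gcongr
    _ = #L / q := mul_one_div _ _

theorem expect_excess_le (L : Finset ι) (θ : ℝ) {s : ℝ} (hs : 0 < s) :
    𝔼 x : ι × β → A, excess x L θ ≤ Fintype.card β * Fintype.card A *
      (#L / Fintype.card A / (2 * s) + s / 2 + max (#L / Fintype.card A - θ) 0) := by
  set μ : ℝ := #L / Fintype.card A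
  have hpoint : ∀ p, 𝔼 x : ι × β → A, max ((load x L p : ℝ) - θ) 0
      ≤ μ / (2 * s) + s / 2 + max (μ - θ) 0 := fun p => calc
    _ ≤ 𝔼 x : ι × β → A, (((load x L p : ℝ) - μ) ^ 2 / (2 * s) + s / 2 + max (μ - θ) 0) :=
        Finset.expect_le_expect fun x _ => max_sub_le_sq_div_add _ μ θ hs
    _ = (𝔼 x : ι × β → A, ((load x L p : ℝ) - μ) ^ 2) / (2 * s) + s / 2 + max (μ - θ) 0 := by
        rw [Finset.expect_add_distrib, Finset.expect_add_distrib, ← Finset.expect_div]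
        simp
    _ ≤ μ / (2 * s) + s / 2 + max (μ - θ) 0 := by
        gcongr; exact expect_sq_load_sub_le L p
  calc 𝔼 x : ι × β → A, excess x L θ = ∑ p, 𝔼 x : ι × β → A, max ((load x L p : ℝ) - θ) 0 :=
        Finset.expect_sum_comm _ _ _
    _ ≤ ∑ _p : β × A, (μ / (2 * s) + s / 2 + max (μ - θ) 0) := Finset.sum_le_sum fun p _ => hpoint p
    _ = _ := by
        rw [Finset.sum_const, Finset.card_univ, Fintype.card_prod, nsmul_eq_mul]; push_cast; ring

theorem exists_forall_excess_lt {n : ℕ} {θ t s μ B : ℝ} (ht : 0 ≤ t) (ht1 : t ≤ 1) (hs : 0 < s)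
    (hμ : Fintype.card β * Fintype.card A *
      (n / Fintype.card A / (2 * s) + s / 2 + max (n / Fintype.card A - θ) 0) ≤ μ)
    (hB : (Fintype.card ι).choose n * exp (t * μ + t ^ 2 * (n * Fintype.card β) - t * B) < 1) :
    ∃ x : ι × β → A, ∀ L : Finset ι, #L = n → excess x L θ < B := by
  have hL : ∀ L : Finset ι, #L = n →
      𝔼 x : ι × β → A, (if B ≤ excess x L θ then (1 : ℝ) else 0)
        ≤ exp (t * μ + t ^ 2 * (n * Fintype.card β) - t * B) := by
    intro L hLn
    have hc : ∑ k : ι × β, (if k.1 ∈ L then (1 : ℝ) else 0) ^ 2 = n * Fintype.card β := by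
      rw [Fintype.sum_prod_type]; simp [hLn]
    refine (expect_indicator_le_of_hasBoundedDifferences ht (fun k => ?_)
      (hasBoundedDifferences_excess L θ) B).trans ?_
    · split_ifs <;> linarith
    · rw [hc]
      gcongr
      exact (expect_excess_le L θ hs).trans (hLn ▸ hμ)
  obtain ⟨x, hx⟩ := exists_forall_not_of_sum_expect_lt_one (Finset.powersetCard n univ)
    (fun L x => B ≤ excess x L θ) <| by
      refine lt_of_le_of_lt (Finset.sum_le_sum fun L hL' =>
        hL L (Finset.mem_powersetCard_univ.1 hL')) ?_
      simpa [Finset.card_powersetCard] using hB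
  exact ⟨x, fun L hLn => not_le.1 (hx L (Finset.mem_powersetCard_univ.2 hLn))⟩

end Excess

section BlockSets

variable {ι β A γ : Type*} [Fintype β] [DecidableEq γ] (e : β × A ↪ γ) (x : ι × β → A)

def blockSet (ℓ : ι) : Finset γ := univ.image fun i => e (i, x (ℓ, i))

theorem card_blockSet (ℓ : ι) : #(blockSet e x ℓ) = Fintype.card β :=
  Finset.card_image_of_injective _ fun _ _ h => (Prod.ext_iff.1 (e.injective h)).1

theorem card_inter_blockSet (T : Finset γ) (ℓ : ι) :
    #(T ∩ blockSet e x ℓ) = #{i | e (i, x (ℓ, i)) ∈ T} := by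
  rw [blockSet, Finset.inter_comm, ← Finset.filter_mem_eq_inter, Finset.filter_image,
    Finset.card_image_of_injective _ fun _ _ h => (Prod.ext_iff.1 (e.injective h)).1]

variable [Fintype A] [DecidableEq A]

theorem sum_card_inter_blockSet (T : Finset γ) (L : Finset ι) :
    ∑ ℓ ∈ L, #(T ∩ blockSet e x ℓ) = ∑ p with e p ∈ T, load x L p := by
  simp only [card_inter_blockSet, load, Finset.card_filter]
  rw [Finset.sum_comm, Finset.sum_filter, Fintype.sum_prod_type]
  refine Finset.sum_congr rfl fun i _ => ?_
  rw [← Finset.sum_filter (fun b => e (i, b) ∈ T), Finset.sum_comm]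
  refine Finset.sum_congr rfl fun ℓ _ => ?_
  simp

theorem sum_card_inter_blockSet_le {θ : ℝ} (hθ : 0 ≤ θ) (T : Finset γ) (L : Finset ι) :
    ∑ ℓ ∈ L, (#(T ∩ blockSet e x ℓ) : ℝ) ≤ θ * #T + excess x L θ := by
  have hP : #{p | e p ∈ T} ≤ #T :=
    Finset.card_le_card_of_injOn e (fun p hp => (Finset.mem_filter.1 hp).2) e.injective.injOn
  calc ∑ ℓ ∈ L, (#(T ∩ blockSet e x ℓ) : ℝ) = ∑ p with e p ∈ T, (load x L p : ℝ) := by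
        exact_mod_cast sum_card_inter_blockSet e x T L
    _ ≤ ∑ p with e p ∈ T, (θ + max ((load x L p : ℝ) - θ) 0) :=
        Finset.sum_le_sum fun p _ => by linarith [le_max_left ((load x L p : ℝ) - θ) 0]
    _ ≤ θ * #T + excess x L θ := by
        rw [Finset.sum_add_distrib, Finset.sum_const, nsmul_eq_mul, mul_comm]
        gcongr
        exact Finset.sum_le_sum_of_subset_of_nonneg (Finset.filter_subset _ _)
          fun _ _ _ => le_max_right _ _

end BlockSets

theorem choose_lt_exp_of_le_two_rpow {z n : ℕ} (hn : 0 < n) {a : ℝ} (ha : 0 < a)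
    (hz : (z : ℝ) ≤ 2 ^ (a / n)) : (z.choose n : ℝ) < exp a := by
  calc (z.choose n : ℝ) ≤ (z : ℝ) ^ n := by exact_mod_cast Nat.choose_le_pow z n
    _ ≤ (2 ^ (a / n)) ^ n := by gcongr
    _ = exp (log 2 * a) := by
        rw [← rpow_natCast, ← rpow_mul zero_le_two, div_mul_cancel₀ _ (by positivity),
          rpow_def_of_pos two_pos]
    _ < exp a := exp_lt_exp.2 (mul_lt_of_lt_one_left ha (by linarith [log_two_lt_d9]))

theorem mean_bound_le_of_blocks {n c w q : ℕ} {ε : ℝ} (hε : 0 < ε) (hεn : ε ^ 3 * n = 1)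
    (hq : 0 < q) (hwε : (w : ℝ) ≤ ε * c) (hwq : (w : ℝ) * q ≤ c) (hεq : 1 ≤ ε * (q + 1)) :
    (w : ℝ) * q * (n / q / (2 * ε⁻¹) + ε⁻¹ / 2 + max (n / q - ε * n) 0) ≤ 2 * ε ^ 2 * n * c := by
  have hq' : (0 : ℝ) < q := by exact_mod_cast hq
  have hεinv : ε⁻¹ = ε ^ 2 * n := by field_simp; linarith
  have hmax : max ((n : ℝ) / q - ε * n) 0 ≤ ε * n / q := by
    refine max_le ?_ (by positivity)
    rw [div_sub' hq'.ne', div_le_div_iff_of_pos_right hq']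
    nlinarith
  have h1 : (w : ℝ) * q * (n / q / (2 * ε⁻¹)) ≤ ε ^ 2 * n * c / 2 := calc
    _ = ε * n * w / 2 := by field_simp
    _ ≤ ε * n * (ε * c) / 2 := by gcongr
    _ = _ := by ring
  have h2 : (w : ℝ) * q * (ε⁻¹ / 2) ≤ ε ^ 2 * n * c / 2 := by
    rw [hεinv]; nlinarith
  have h3 : (w : ℝ) * q * max ((n : ℝ) / q - ε * n) 0 ≤ ε ^ 2 * n * c := by
    calc _ ≤ (w : ℝ) * q * (ε * n / q) := by gcongr
      _ = ε * n * w := by field_simp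
      _ ≤ ε * n * (ε * c) := by gcongr
      _ = _ := by ring
  nlinarith

theorem chernoff_exponent_le_of_blocks {n c w : ℕ} {ε : ℝ} (hεn : ε ^ 3 * n = 1)
    (hwε : (w : ℝ) ≤ ε * c) :
    ε / 2 * (2 * ε ^ 2 * n * c) + (ε / 2) ^ 2 * (n * w) - ε / 2 * (3 * ε ^ 2 * n * c)
      ≤ -(c / 4) := by
  have : (ε / 2) ^ 2 * (n * w) ≤ (ε / 2) ^ 2 * (n * (ε * c)) := by gcongr
  linear_combination this - (c / 4 : ℝ) * hεn

theorem exists_blockSets {n c z : ℕ} {ε : ℝ} (hε : 0 < ε) (hε1 : ε ≤ 1) (hεn : ε ^ 3 * n = 1)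
    (hεc : 1 ≤ ε * c) (hz : (z.choose n : ℝ) < exp (c / 4)) :
    ∃ S : Fin z → Finset (Fin c), (∀ ℓ, #(S ℓ) = ⌊ε * c⌋₊) ∧
      ∀ (T : Finset (Fin c)) (L : Finset (Fin z)), #L = n →
        ∑ ℓ ∈ L, (#(T ∩ S ℓ) : ℝ) ≤ ε * n * #T + 3 * ε ^ 2 * n * c := by
  set w := ⌊ε * c⌋₊
  set q := c / w
  have hw : 0 < w := Nat.floor_pos.2 hεc
  have hwε : (w : ℝ) ≤ ε * c := Nat.floor_le (by positivity)
  have hwc : w ≤ c := by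
    have : (w : ℝ) ≤ c := hwε.trans (mul_le_of_le_one_left c.cast_nonneg hε1)
    exact_mod_cast this
  have hq : 0 < q := Nat.div_pos hwc hw
  have hwq : w * q ≤ c := Nat.mul_div_le c w
  have hεq : 1 ≤ ε * (q + 1) := by
    have : (c : ℝ) < w * (q + 1) := by exact_mod_cast Nat.lt_mul_div_succ c hw
    nlinarith
  have : Nonempty (Fin q) := Fin.pos_iff_nonempty.1 hq
  -- `s = ε⁻¹` balances the two AM-GM terms of `expect_excess_le`, and `t = ε / 2` makes the
  -- Chernoff exponent at most `-c / 4`.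
  obtain ⟨x, hx⟩ := exists_forall_excess_lt (ι := Fin z) (β := Fin w) (A := Fin q)
    (θ := ε * n) (t := ε / 2) (s := ε⁻¹) (μ := 2 * ε ^ 2 * n * c) (B := 3 * ε ^ 2 * n * c)
    (by positivity) (by linarith) (by positivity) (by
      simpa only [Fintype.card_fin] using
        mean_bound_le_of_blocks hε hεn hq hwε (by exact_mod_cast hwq) hεq) (by
      rw [Fintype.card_fin, Fintype.card_fin]
      calc _ ≤ (z.choose n : ℝ) * exp (-(c / 4)) := by
            gcongr; exact chernoff_exponent_le_of_blocks hεn hwε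
        _ < exp (c / 4) * exp (-(c / 4)) := by gcongr
        _ = 1 := by rw [← exp_add, add_neg_cancel, exp_zero])
  let e : Fin w × Fin q ↪ Fin c := finProdFinEquiv.toEmbedding.trans (Fin.castLEEmb hwq)
  refine ⟨blockSet e x, fun ℓ => by rw [card_blockSet, Fintype.card_fin], fun T L hL => ?_⟩
  linarith [sum_card_inter_blockSet_le e x (by positivity : 0 ≤ ε * n) T L, hx L hL]

/-- There are universal constants `κ > 0` and `C > 0` such that for all positive integers
`n`, `c` with `c ≥ C·n`, setting `ε = n^{-1/3}`, for every `z` with `n ≤ z ≤ 2^{κ·c/n}`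
there exist subsets `S_1, …, S_z` of `[c]`, each of size `⌊εc⌋`, such that for every
`S ⊆ [c]` and every `L ⊆ [z]` of size `n`,
`Σ_{ℓ∈L} |S ∩ S_ℓ| ≤ (|S|/c + 3ε) · εnc`. -/
theorem exists_hard_column_sets :
    ∃ κ : ℝ, 0 < κ ∧ ∃ C : ℝ, 0 < C ∧
      ∀ n c : ℕ, 0 < n → 0 < c → C * n ≤ (c : ℝ) →
        ∀ z : ℕ, n ≤ z → (z : ℝ) ≤ 2 ^ (κ * c / n) →
          ∃ S : Fin z → Finset (Fin c),
            (∀ ℓ, (S ℓ).card = ⌊(n : ℝ) ^ (-(1/3) : ℝ) * c⌋₊) ∧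
            ∀ (T : Finset (Fin c)) (L : Finset (Fin z)), L.card = n →
              (∑ ℓ ∈ L, ((T ∩ S ℓ).card : ℝ)) ≤
                ((T.card : ℝ) / c + 3 * (n : ℝ) ^ (-(1/3) : ℝ)) *
                  ((n : ℝ) ^ (-(1/3) : ℝ) * n * c) := by
  refine ⟨1 / 4, by norm_num, 1, one_pos, fun n c hn hc hcn z _ hz => ?_⟩
  set ε : ℝ := (n : ℝ) ^ (-(1 / 3) : ℝ)
  have hn1 : (1 : ℝ) ≤ n := by exact_mod_cast hn
  have hε : 0 < ε := by positivity
  have hε1 : ε ≤ 1 := rpow_le_one_of_one_le_of_nonpos hn1 (by norm_num)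
  have hεn : ε ^ 3 * n = 1 := by
    rw [← rpow_natCast, ← rpow_mul (by positivity)]
    norm_num
    rw [rpow_neg_one, inv_mul_cancel₀ (by positivity)]
  have hεc : 1 ≤ ε * c := calc
    1 = ε ^ 3 * n := hεn.symm
    _ ≤ ε * c := by
      gcongr
      · exact pow_le_of_le_one hε.le hε1 (by norm_num)
      · exact_mod_cast (by linarith : (n : ℝ) ≤ c)
  have hchoose : (z.choose n : ℝ) < exp (c / 4) := by
    simpa [div_eq_inv_mul] using choose_lt_exp_of_le_two_rpow hn (by positivity) hz
  obtain ⟨S, hS, hST⟩ := exists_blockSets hε hε1 hεn hεc hchoose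
  refine ⟨S, hS, fun T L hL => (hST T L hL).trans_eq ?_⟩
  field_simp
end

section
/- For every positive integer n and all reals p, δ ∈ (0,1) there exist constants κ > 0 and c₀ (depending only on n, p, δ) such that for every integer c ≥ c₀ and every integer z with n ≤ z ≤ 2^{κc} there exist subsets S_1, …, S_z ⊆ [c] with (1−δ)pc ≤ |S_ℓ| ≤ (1+δ)pc for every ℓ ∈ [z], and such that for every pair of disjoint sets K, L ⊆ [z] with |K| + |L| = n, |(∩_{ℓ∈K} ([c] ∖ S_ℓ)) ∩ (∩_{ℓ∈L} S_ℓ)| ≤ (1+δ)·(1−p)^{|K|}·p^{|L|}·c. -/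
/-!
Choose the sets at random: every `j ∈ [c]` lies in every `S_ℓ` independently with probability
`q`, where `q ≥ p` is a rational density so close to `p` that `q^i ≤ (1 + δ/3) p^i` for `i ≤ n`;
rational, because probabilities are then counts in a finite product space. For disjoint `K, L`
with `|K| + |L| = n` the count in the statement is binomial with mean
`(1-q)^|K| q^|L| c ≥ min(q, 1-q)^n c`, so by Chernoff's bound it exceeds `1 + δ/3` times its mean
with probability at most `exp(-γc)` for some `γ > 0` depending only on `n, p, δ`; the same holds
for `|S_ℓ|` leaving `[(1-δ/3)qc, (1+δ/3)qc]`. There are at most `2z + (2z)^n` such events, and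
`2 (2z)^n exp(-γc) < 1` once `z ≤ 2^{κc}` with `κ = γ / (2n log 2)` and `c` is large, so some choice
avoids them all.
-/
open Finset Real

noncomputable def chernoffRate (ε : ℝ) : ℝ := (1 + ε) * log (1 + ε) - ε

theorem chernoffRate_pos {ε : ℝ} (hε : -1 < ε) (hε0 : ε ≠ 0) : 0 < chernoffRate ε := by
  have hpos : 0 < 1 + ε := by linarith
  have hlog := log_lt_sub_one_of_pos (inv_pos.2 hpos) (by simpa using hε0)
  rw [log_inv] at hlog
  have := mul_lt_mul_of_pos_left hlog hpos
  rw [mul_sub, mul_inv_cancel₀ hpos.ne'] at this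
  unfold chernoffRate
  linarith

section ColumnCount

variable {α : Type*} [Fintype α] (P : α → Prop) [DecidablePred P] (c : ℕ)

theorem sum_exp_mul_card_filter (t : ℝ) :
    ∑ ω : Fin c → α, exp (t * #{j | P (ω j)}) = (∑ x, if P x then exp t else 1) ^ c := by
  rw [Fintype.sum_pow]
  refine sum_congr rfl fun ω _ => ?_
  rw [mul_comm, exp_nat_mul, ← prod_const, prod_filter]

theorem card_filter_le_exp_mul (t a : ℝ) :
    (#{ω : Fin c → α | t * a ≤ t * #{j | P (ω j)}} : ℝ) ≤
      exp (-(t * a)) * (∑ x, if P x then exp t else 1) ^ c := by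
  rw [← sum_exp_mul_card_filter, mul_sum, card_eq_sum_ones, Nat.cast_sum, sum_filter,
    Nat.cast_one]
  gcongr with ω
  split_ifs with h
  · rw [← exp_add]
    apply one_le_exp
    linarith
  · positivity

variable {P}

theorem sum_ite_exp_le {r : ℝ} (hr : (#{x | P x} : ℝ) = r * Fintype.card α) (t : ℝ) :
    ∑ x, (if P x then exp t else 1) ≤ Fintype.card α * exp (r * (exp t - 1)) := by
  have hsplit : ∀ x, (if P x then exp t else 1) = 1 + (exp t - 1) * if P x then 1 else 0 := by
    intro x; split_ifs <;> ring
  simp only [hsplit, sum_add_distrib, ← mul_sum, sum_boole, hr, sum_const, card_univ, nsmul_eq_mul,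
    mul_one]
  calc (Fintype.card α : ℝ) + (exp t - 1) * (r * Fintype.card α)
      = Fintype.card α * (r * (exp t - 1) + 1) := by ring
    _ ≤ Fintype.card α * exp (r * (exp t - 1)) := by gcongr; exact add_one_le_exp _

/-- The sign of `log (1 + ε)` is that of `ε`, so this is the upper tail for `ε > 0` and the lower
tail for `ε < 0`. -/
theorem card_filter_log_mul_le {ε r : ℝ} (hε : -1 < ε)
    (hr : (#{x | P x} : ℝ) = r * Fintype.card α) :
    (#{ω : Fin c → α |
        log (1 + ε) * ((1 + ε) * r * c) ≤ log (1 + ε) * #{j | P (ω j)}} : ℝ) ≤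
      Fintype.card α ^ c * exp (-(c * r * chernoffRate ε)) := by
  have hpos : 0 < 1 + ε := by linarith
  calc _ ≤ exp (-(log (1 + ε) * ((1 + ε) * r * c))) *
          (∑ x, if P x then exp (log (1 + ε)) else 1) ^ c :=
        card_filter_le_exp_mul P c _ _
    _ ≤ exp (-(log (1 + ε) * ((1 + ε) * r * c))) *
          (Fintype.card α * exp (r * (exp (log (1 + ε)) - 1))) ^ c := by
        gcongr
        exact sum_ite_exp_le hr _
    _ = Fintype.card α ^ c * exp (-(c * r * chernoffRate ε)) := by
        rw [exp_log hpos, mul_pow, ← exp_nat_mul, mul_left_comm, ← exp_add, chernoffRate]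
        ring_nf

theorem card_upper_tail_le {ε r : ℝ} (hε : 0 < ε) (hr : (#{x | P x} : ℝ) = r * Fintype.card α) :
    (#{ω : Fin c → α | (1 + ε) * r * c ≤ #{j | P (ω j)}} : ℝ) ≤
      Fintype.card α ^ c * exp (-(c * r * chernoffRate ε)) := by
  refine le_trans ?_ (card_filter_log_mul_le c (by linarith) hr)
  refine Nat.cast_le.2 <| card_le_card fun ω => ?_
  simp only [mem_filter, mem_univ, true_and]
  exact fun h => mul_le_mul_of_nonneg_left h (log_nonneg (by linarith))

theorem card_lower_tail_le {ε r : ℝ} (hε0 : 0 ≤ ε) (hε : ε < 1)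
    (hr : (#{x | P x} : ℝ) = r * Fintype.card α) :
    (#{ω : Fin c → α | (#{j | P (ω j)} : ℝ) ≤ (1 - ε) * r * c} : ℝ) ≤
      Fintype.card α ^ c * exp (-(c * r * chernoffRate (-ε))) := by
  refine le_trans ?_ (card_filter_log_mul_le c (by linarith) hr)
  refine Nat.cast_le.2 <| card_le_card fun ω => ?_
  simp only [mem_filter, mem_univ, true_and]
  exact fun h => mul_le_mul_of_nonpos_left h (log_nonpos (by linarith) (by linarith))

end ColumnCount

section Pattern

variable {ι β : Type*} [Fintype ι] [DecidableEq ι] [Fintype β] [DecidableEq β]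

theorem card_filter_pattern (T : Finset β) {q : ℝ} (hq : (#T : ℝ) = q * Fintype.card β)
    {K L : Finset ι} (hKL : Disjoint K L) :
    (#{x : ι → β | (∀ ℓ ∈ K, x ℓ ∉ T) ∧ ∀ ℓ ∈ L, x ℓ ∈ T} : ℝ) =
      (1 - q) ^ #K * q ^ #L * Fintype.card (ι → β) := by
  set G : ι → Finset β := fun ℓ => if ℓ ∈ K then Tᶜ else if ℓ ∈ L then T else univ
  have hfilter : ({x | (∀ ℓ ∈ K, x ℓ ∉ T) ∧ ∀ ℓ ∈ L, x ℓ ∈ T} : Finset (ι → β)) =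
      Fintype.piFinset G := by
    ext x
    simp only [mem_filter, mem_univ, true_and, Fintype.mem_piFinset, G]
    constructor
    · rintro ⟨hK, hL⟩ ℓ
      split_ifs with h1 h2 <;> simp_all
    · intro h
      exact ⟨fun ℓ hℓ => by simpa [hℓ] using h ℓ,
        fun ℓ hℓ => by simpa [hℓ, disjoint_right.1 hKL hℓ] using h ℓ⟩
  have hG : ∀ ℓ, (#(G ℓ) : ℝ) =
      Fintype.card β * (if ℓ ∈ K then 1 - q else if ℓ ∈ L then q else 1) := by
    intro ℓ
    simp only [G]
    split_ifs
    · rw [card_compl, Nat.cast_sub (card_le_univ T), hq]; ring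
    · rw [hq]; ring
    · simp
  have hLK : ({ℓ | ℓ ∉ K} : Finset ι) ∩ L = L := by
    ext ℓ; simpa using fun hℓ => disjoint_right.1 hKL hℓ
  rw [hfilter, Fintype.card_piFinset, Nat.cast_prod, prod_congr rfl fun ℓ _ => hG ℓ,
    prod_mul_distrib, prod_const, prod_ite, prod_const, prod_ite_mem, hLK, prod_const,
    filter_mem_eq_inter, univ_inter, Fintype.card_fun, card_univ]
  push_cast
  ring

end Pattern

theorem card_pairs_card_add_eq_le {ι : Type*} [Fintype ι] (n : ℕ) :
    #{Q : Finset ι × Finset ι | #Q.1 + #Q.2 = n} ≤ (2 * Fintype.card ι) ^ n := by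
  calc #{Q : Finset ι × Finset ι | #Q.1 + #Q.2 = n}
      ≤ #(powersetCard n (univ : Finset (ι ⊕ ι))) := by
        refine card_le_card_of_injOn (fun Q => Q.1.disjSum Q.2) (fun Q hQ => ?_) ?_
        · simpa [card_disjSum] using hQ
        · rintro ⟨K, L⟩ - ⟨K', L'⟩ - h
          simpa using h
    _ ≤ (2 * Fintype.card ι) ^ n := by
        rw [card_powersetCard, card_univ, Fintype.card_sum, two_mul]
        exact Nat.choose_le_pow _ _

theorem two_mul_add_card_disjoint_pairs_le {z n : ℕ} (hn : n ≠ 0) :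
    2 * z + #{Q : Finset (Fin z) × Finset (Fin z) | Disjoint Q.1 Q.2 ∧ #Q.1 + #Q.2 = n} ≤
      2 * (2 * z) ^ n := by
  have hpairs := (card_le_card (monotone_filter_right univ
    fun Q _ (hQ : Disjoint Q.1 Q.2 ∧ #Q.1 + #Q.2 = n) => hQ.2)).trans
    (card_pairs_card_add_eq_le (ι := Fin z) n)
  rw [Fintype.card_fin] at hpairs
  linarith [Nat.le_self_pow hn (2 * z)]

theorem exists_forall_notMem_of_sum_card_lt {Ω ι : Type*} [Fintype Ω] [DecidableEq Ω]
    (s : Finset ι) (E : ι → Finset Ω) (h : ∑ i ∈ s, (#(E i) : ℝ) < Fintype.card Ω) :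
    ∃ ω, ∀ i ∈ s, ω ∉ E i := by
  have hcard : #(s.biUnion E) < #(univ : Finset Ω) := by
    rw [card_univ]
    exact_mod_cast card_biUnion_le.trans_lt (by exact_mod_cast h)
  obtain ⟨ω, -, hω⟩ := exists_mem_notMem_of_card_lt_card hcard
  exact ⟨ω, fun i hi hωi => hω (mem_biUnion.2 ⟨i, hi, hωi⟩)⟩

theorem mem_Icc_of_card_eq_mul_card {β : Type*} [Fintype β] [Nonempty β] {T : Finset β} {q : ℝ}
    (hq : (#T : ℝ) = q * Fintype.card β) : q ∈ Set.Icc 0 1 := by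
  have hβ : (0 : ℝ) < Fintype.card β := by exact_mod_cast Fintype.card_pos
  have hT : (#T : ℝ) ≤ Fintype.card β := by exact_mod_cast card_le_univ T
  rw [hq] at hT
  exact ⟨nonneg_of_mul_nonneg_left (hq ▸ (#T).cast_nonneg) hβ, by nlinarith⟩

theorem exp_neg_le_of_rate_le {q ε γ r φ : ℝ} {n c : ℕ} (hq : q ∈ Set.Icc 0 1) (hε0 : 0 < ε)
    (hε1 : ε < 1) (hγ : γ ≤ min q (1 - q) ^ n * min (chernoffRate ε) (chernoffRate (-ε)))
    (hr : min q (1 - q) ^ n ≤ r) (hφ : min (chernoffRate ε) (chernoffRate (-ε)) ≤ φ) :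
    exp (-(c * r * φ)) ≤ exp (-(γ * c)) := by
  have hm : 0 ≤ min q (1 - q) ^ n := pow_nonneg (le_min hq.1 (sub_nonneg.2 hq.2)) n
  have hrate : 0 ≤ min (chernoffRate ε) (chernoffRate (-ε)) :=
    le_min (chernoffRate_pos (by linarith) hε0.ne').le
      (chernoffRate_pos (by linarith) (by linarith)).le
  have : γ ≤ r * φ := hγ.trans (mul_le_mul hr hφ hrate (hm.trans hr))
  exact exp_le_exp.2 (by nlinarith [c.cast_nonneg (α := ℝ)])

section RandomColumns

variable {β : Type*} [Fintype β] [DecidableEq β] [Nonempty β] {T : Finset β} {q : ℝ}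
  (hq : (#T : ℝ) = q * Fintype.card β) (c : ℕ) {z n : ℕ} {ε γ : ℝ} (hε0 : 0 < ε) (hε1 : ε < 1)
  (hγ : γ ≤ min q (1 - q) ^ n * min (chernoffRate ε) (chernoffRate (-ε)))
include hq hε0 hε1 hγ

theorem card_size_tails_le (hn : n ≠ 0) (ℓ : Fin z) :
    (#{ω : Fin c → Fin z → β | (#{j | ω j ℓ ∈ T} : ℝ) ≤ (1 - ε) * q * c ∨
        (1 + ε) * q * c ≤ #{j | ω j ℓ ∈ T}} : ℝ) ≤
      2 * (Fintype.card (Fin z → β) ^ c * exp (-(γ * c))) := by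
  have hq01 := mem_Icc_of_card_eq_mul_card hq
  have hdens : (#{x : Fin z → β | x ℓ ∈ T} : ℝ) = q * Fintype.card (Fin z → β) := by
    simpa using card_filter_pattern T hq (disjoint_empty_left {ℓ})
  have hqm : min q (1 - q) ^ n ≤ q :=
    (pow_le_of_le_one (le_min hq01.1 (sub_nonneg.2 hq01.2)) ((min_le_left _ _).trans hq01.2)
      hn).trans (min_le_left _ _)
  rw [filter_or, two_mul]
  refine (Nat.cast_le.2 (card_union_le _ _)).trans ?_
  push_cast
  gcongr
  · exact (card_lower_tail_le (P := fun x : Fin z → β => x ℓ ∈ T) c hε0.le hε1 hdens).trans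
      (mul_le_mul_of_nonneg_left
        (exp_neg_le_of_rate_le hq01 hε0 hε1 hγ hqm (min_le_right _ _)) (by positivity))
  · exact (card_upper_tail_le (P := fun x : Fin z → β => x ℓ ∈ T) c hε0 hdens).trans
      (mul_le_mul_of_nonneg_left
        (exp_neg_le_of_rate_le hq01 hε0 hε1 hγ hqm (min_le_left _ _)) (by positivity))

theorem card_pattern_tail_le {K L : Finset (Fin z)} (hKL : Disjoint K L)
    (hKLn : #K + #L = n) :
    (#{ω : Fin c → Fin z → β | (1 + ε) * ((1 - q) ^ #K * q ^ #L) * c ≤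
        #{j | (∀ ℓ ∈ K, ω j ℓ ∉ T) ∧ ∀ ℓ ∈ L, ω j ℓ ∈ T}} : ℝ) ≤
      Fintype.card (Fin z → β) ^ c * exp (-(γ * c)) := by
  have hq01 := mem_Icc_of_card_eq_mul_card hq
  have hm : 0 ≤ min q (1 - q) := le_min hq01.1 (sub_nonneg.2 hq01.2)
  have hdens : min q (1 - q) ^ n ≤ (1 - q) ^ #K * q ^ #L := by
    rw [← hKLn, pow_add]
    exact mul_le_mul (pow_le_pow_left₀ hm (min_le_right _ _) _)
      (pow_le_pow_left₀ hm (min_le_left _ _) _) (pow_nonneg hm _)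
      (pow_nonneg (sub_nonneg.2 hq01.2) _)
  refine (card_upper_tail_le (P := fun x : Fin z → β => (∀ ℓ ∈ K, x ℓ ∉ T) ∧ ∀ ℓ ∈ L, x ℓ ∈ T)
    c hε0 (by convert card_filter_pattern T hq hKL)).trans ?_
  exact mul_le_mul_of_nonneg_left (exp_neg_le_of_rate_le hq01 hε0 hε1 hγ hdens (min_le_left _ _))
    (by positivity)

end RandomColumns

/-- Counting over `ω : Fin c → Fin z → β` is the uniform distribution; the sets are
`S ℓ = {j | ω j ℓ ∈ T}`, so the events `j ∈ S ℓ` are independent and each has probability `q`. -/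
theorem exists_column_sets_of_density {β : Type*} [Fintype β] [DecidableEq β] [Nonempty β]
    (T : Finset β) {q : ℝ} (hq : (#T : ℝ) = q * Fintype.card β) {ε γ : ℝ} (hε0 : 0 < ε)
    (hε1 : ε < 1) {n : ℕ} (hn : n ≠ 0)
    (hγ : γ ≤ min q (1 - q) ^ n * min (chernoffRate ε) (chernoffRate (-ε)))
    {c z : ℕ} (hsmall : 2 * (2 * z : ℝ) ^ n * exp (-(γ * c)) < 1) :
    ∃ S : Fin z → Finset (Fin c),
      (∀ ℓ, (1 - ε) * q * c < #(S ℓ) ∧ (#(S ℓ) : ℝ) < (1 + ε) * q * c) ∧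
      ∀ K L : Finset (Fin z), Disjoint K L → #K + #L = n →
        (#{j | (∀ ℓ ∈ K, j ∉ S ℓ) ∧ ∀ ℓ ∈ L, j ∈ S ℓ} : ℝ) <
          (1 + ε) * (1 - q) ^ #K * q ^ #L * c := by
  set A : ℝ := (Fintype.card (Fin z → β) : ℝ)
  set pairs : Finset (Finset (Fin z) × Finset (Fin z)) :=
    {Q | Disjoint Q.1 Q.2 ∧ #Q.1 + #Q.2 = n}
  set E : Fin z → Finset (Fin c → Fin z → β) := fun ℓ =>
    {ω | (#{j | ω j ℓ ∈ T} : ℝ) ≤ (1 - ε) * q * c ∨ (1 + ε) * q * c ≤ #{j | ω j ℓ ∈ T}}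
  set F : Finset (Fin z) × Finset (Fin z) → Finset (Fin c → Fin z → β) := fun Q =>
    {ω | (1 + ε) * ((1 - q) ^ #Q.1 * q ^ #Q.2) * c ≤
      #{j | (∀ ℓ ∈ Q.1, ω j ℓ ∉ T) ∧ ∀ ℓ ∈ Q.2, ω j ℓ ∈ T}}
  have hsum : ∑ i ∈ univ.disjSum pairs, (#(Sum.elim E F i) : ℝ) <
      Fintype.card (Fin c → Fin z → β) := by
    rw [sum_disjSum]
    calc _ ≤ ∑ ℓ : Fin z, 2 * (A ^ c * exp (-(γ * c))) + ∑ Q ∈ pairs, A ^ c * exp (-(γ * c)) :=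
          add_le_add (sum_le_sum fun ℓ _ => card_size_tails_le hq c hε0 hε1 hγ hn ℓ)
            (sum_le_sum fun Q hQ => card_pattern_tail_le hq c hε0 hε1 hγ
              (mem_filter.1 hQ).2.1 (mem_filter.1 hQ).2.2)
      _ = (2 * z + #pairs : ℕ) * (A ^ c * exp (-(γ * c))) := by
          push_cast [sum_const, card_univ, Fintype.card_fin, nsmul_eq_mul]
          ring
      _ ≤ (2 * (2 * z) ^ n : ℕ) * (A ^ c * exp (-(γ * c))) := by
          gcongr
          exact two_mul_add_card_disjoint_pairs_le hn
      _ = (2 * (2 * z) ^ n * exp (-(γ * c))) * A ^ c := by push_cast; ring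
      _ < 1 * A ^ c := by gcongr
      _ = Fintype.card (Fin c → Fin z → β) := by simp [A]
  obtain ⟨ω, hω⟩ := exists_forall_notMem_of_sum_card_lt _ _ hsum
  refine ⟨fun ℓ => {j | ω j ℓ ∈ T}, fun ℓ => ?_, fun K L hKL hKLn => ?_⟩
  · simpa [E] using hω (.inl ℓ) (by simp)
  · simpa [F, mul_assoc] using hω (.inr (K, L)) (by simp [pairs, hKL, hKLn])

theorem exists_finset_density_mem_Ico {p η : ℝ} (hp0 : 0 ≤ p) (hp1 : p ≤ 1) (hη : 0 < η) :
    ∃ (M : ℕ) (T : Finset (Fin (M + 1))) (q : ℝ),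
      (#T : ℝ) = q * Fintype.card (Fin (M + 1)) ∧ p ≤ q ∧ q < p + η := by
  obtain ⟨M, hM⟩ := exists_nat_gt η⁻¹
  have hN : (0 : ℝ) < M + 1 := by positivity
  have hk : ⌈p * (M + 1)⌉₊ ≤ #(univ : Finset (Fin (M + 1))) := by
    rw [card_univ, Fintype.card_fin, Nat.ceil_le]
    push_cast
    nlinarith
  obtain ⟨T, -, hT⟩ := exists_subset_card_eq hk
  refine ⟨M, T, ⌈p * (M + 1)⌉₊ / (M + 1), ?_, ?_, ?_⟩
  · rw [hT, Fintype.card_fin]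
    push_cast
    rw [div_mul_cancel₀ _ hN.ne']
  · rw [le_div_iff₀ hN]
    exact Nat.le_ceil _
  · rw [div_lt_iff₀ hN]
    have h1 := Nat.ceil_lt_add_one (mul_nonneg hp0 hN.le : 0 ≤ p * (M + 1))
    have h2 : 1 < η * (M + 1) := by
      rw [inv_lt_iff_one_lt_mul₀ hη] at hM
      linarith
    nlinarith

open Filter Topology in
theorem exists_finset_density_near {p η : ℝ} (hp0 : 0 < p) (hp1 : p < 1) (hη : 0 < η) (n : ℕ) :
    ∃ (M : ℕ) (T : Finset (Fin (M + 1))) (q : ℝ), (#T : ℝ) = q * Fintype.card (Fin (M + 1)) ∧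
      p ≤ q ∧ q < 1 ∧ ∀ i ≤ n, q ^ i ≤ (1 + η) * p ^ i := by
  have hnear : ∀ᶠ q in 𝓝 p, q < 1 ∧ ∀ i ∈ Iic n, q ^ i < (1 + η) * p ^ i := by
    refine (eventually_lt_nhds hp1).and ((eventually_all_finset _).2 fun i _ => ?_)
    exact (continuous_pow i).continuousAt.eventually_lt continuousAt_const
      (by nlinarith [pow_pos hp0 i])
  obtain ⟨ε, hε, hball⟩ := Metric.eventually_nhds_iff.1 hnear
  obtain ⟨M, T, q, hq, hpq, hqε⟩ := exists_finset_density_mem_Ico hp0.le hp1.le hε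
  obtain ⟨hq1, hqpow⟩ := hball (by rw [Real.dist_eq, abs_lt]; constructor <;> linarith)
  exact ⟨M, T, q, hq, hpq, hq1, fun i hi => (hqpow i (mem_Iic.2 hi)).le⟩

theorem two_mul_two_mul_pow_mul_exp_lt_one {γ : ℝ} (hγ : 0 < γ) {n : ℕ} (hn : 0 < n) {c z : ℕ}
    (hc : 2 * (n + 1) * log 2 / γ < c) (hz : (z : ℝ) ≤ 2 ^ (γ / (2 * n * log 2) * c)) :
    2 * (2 * z : ℝ) ^ n * exp (-(γ * c)) < 1 := by
  have hzn : (z : ℝ) ^ n ≤ exp (γ * c / 2) := by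
    have hz' : (z : ℝ) ≤ exp (γ * c / (2 * n)) := by
      rw [rpow_def_of_pos two_pos] at hz
      convert hz using 2
      field_simp
    calc (z : ℝ) ^ n ≤ exp (γ * c / (2 * n)) ^ n := by gcongr
      _ = exp (γ * c / 2) := by
          rw [← exp_nat_mul]
          congr 1
          field_simp
  have hc' : (n + 1) * log 2 < γ * c / 2 := by
    rw [div_lt_iff₀ hγ] at hc
    linarith
  calc 2 * (2 * z : ℝ) ^ n * exp (-(γ * c)) = 2 ^ (n + 1) * (z : ℝ) ^ n * exp (-(γ * c)) := by
        ring
    _ ≤ exp ((n + 1) * log 2) * exp (γ * c / 2) * exp (-(γ * c)) := by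
        rw [← Nat.cast_succ, exp_nat_mul, exp_log two_pos]
        gcongr
    _ = exp ((n + 1) * log 2 - γ * c / 2) := by
        rw [← exp_add, ← exp_add]
        ring_nf
    _ < 1 := exp_lt_one_iff.2 (by linarith)

theorem one_add_div_three_mul_le {δ x y : ℝ} (hδ0 : 0 ≤ δ) (hδ1 : δ ≤ 3) (hx : 0 ≤ x)
    (hxy : x ≤ (1 + δ / 3) * y) : (1 + δ / 3) * x ≤ (1 + δ) * y := by
  have hy : 0 ≤ y := by nlinarith
  nlinarith [mul_le_mul_of_nonneg_left hxy (by linarith : 0 ≤ 1 + δ / 3),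
    mul_nonneg hy (mul_nonneg hδ0 (by linarith : 0 ≤ 3 - δ))]

theorem one_sub_pow_mul_pow_le {p q η : ℝ} {n a b : ℕ} (hp0 : 0 ≤ p) (hpq : p ≤ q) (hq1 : q ≤ 1)
    (hqpow : ∀ i ≤ n, q ^ i ≤ (1 + η) * p ^ i) (hb : b ≤ n) :
    (1 - q) ^ a * q ^ b ≤ (1 + η) * ((1 - p) ^ a * p ^ b) := by
  calc (1 - q) ^ a * q ^ b ≤ (1 - p) ^ a * ((1 + η) * p ^ b) :=
        mul_le_mul (pow_le_pow_left₀ (by linarith) (by linarith) _) (hqpow b hb)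
          (pow_nonneg (by linarith) _) (pow_nonneg (by linarith) _)
    _ = (1 + η) * ((1 - p) ^ a * p ^ b) := by ring

/-- For every positive `n` and reals `p, δ ∈ (0,1)` there are constants `κ > 0` and `c₀`
such that for every `c ≥ c₀` and every `z` with `n ≤ z ≤ 2^{κc}` there exist subsets
`S_1, …, S_z ⊆ [c]` of size between `(1−δ)pc` and `(1+δ)pc` such that for all disjoint
`K, L ⊆ [z]` with `|K| + |L| = n`, the number of `j ∈ [c]` lying outside every `S_ℓ`
for `ℓ ∈ K` and inside every `S_ℓ` for `ℓ ∈ L` is at most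
`(1+δ)·(1−p)^{|K|}·p^{|L|}·c`. -/
theorem exists_balanced_column_sets
    (n : ℕ) (hn : 0 < n) (p δ : ℝ)
    (hp : p ∈ Set.Ioo (0 : ℝ) 1) (hδ : δ ∈ Set.Ioo (0 : ℝ) 1) :
    ∃ κ : ℝ, 0 < κ ∧ ∃ c₀ : ℕ, ∀ c : ℕ, c₀ ≤ c →
      ∀ z : ℕ, n ≤ z → (z : ℝ) ≤ 2 ^ (κ * c) →
        ∃ S : Fin z → Finset (Fin c),
          (∀ ℓ, (1 - δ) * p * c ≤ ((S ℓ).card : ℝ) ∧ ((S ℓ).card : ℝ) ≤ (1 + δ) * p * c) ∧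
          ∀ K L : Finset (Fin z), Disjoint K L → K.card + L.card = n →
            ((Finset.univ.filter (fun j : Fin c =>
                (∀ ℓ ∈ K, j ∉ S ℓ) ∧ (∀ ℓ ∈ L, j ∈ S ℓ))).card : ℝ) ≤
              (1 + δ) * (1 - p) ^ K.card * p ^ L.card * c := by
  obtain ⟨hp0, hp1⟩ := hp
  obtain ⟨hδ0, hδ1⟩ := hδ
  obtain ⟨M, T, q, hq, hpq, hq1, hqpow⟩ :=
    exists_finset_density_near hp0 hp1 (by positivity : 0 < δ / 3) n
  set γ := min q (1 - q) ^ n * min (chernoffRate (δ / 3)) (chernoffRate (-(δ / 3)))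
  have hγ : 0 < γ := mul_pos (pow_pos (lt_min (by linarith) (by linarith)) n)
    (lt_min (chernoffRate_pos (by linarith) (by positivity))
      (chernoffRate_pos (by linarith) (by linarith)))
  obtain ⟨c₀, hc₀⟩ := exists_nat_gt (2 * (n + 1) * log 2 / γ)
  refine ⟨γ / (2 * n * log 2),
    div_pos hγ (mul_pos (mul_pos two_pos (by exact_mod_cast hn)) (log_pos one_lt_two)), c₀,
    fun c hc z _ hz => ?_⟩
  obtain ⟨S, hS, hpat⟩ := exists_column_sets_of_density T hq (by linarith : 0 < δ / 3)
    (by linarith) hn.ne' le_rfl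
    (two_mul_two_mul_pow_mul_exp_lt_one hγ hn (hc₀.trans_le (by exact_mod_cast hc)) hz)
  have hweight : ∀ a b, b ≤ n →
      (1 + δ / 3) * (1 - q) ^ a * q ^ b * c ≤ (1 + δ) * (1 - p) ^ a * p ^ b * c := fun a b hb => by
    simpa only [mul_assoc] using mul_le_mul_of_nonneg_right (one_add_div_three_mul_le hδ0.le
      (by linarith) (mul_nonneg (pow_nonneg (by linarith) _) (pow_nonneg (by linarith) _))
      (one_sub_pow_mul_pow_le hp0.le hpq hq1.le hqpow hb)) c.cast_nonneg
  refine ⟨S, fun ℓ => ⟨?_, ?_⟩, fun K L hKL hKLn => ?_⟩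
  · calc (1 - δ) * p * c ≤ (1 - δ / 3) * q * c := by gcongr <;> linarith
      _ ≤ #(S ℓ) := (hS ℓ).1.le
  · simpa using (hS ℓ).2.le.trans (by simpa using hweight 0 1 hn)
  · exact (hpat K L hKL hKLn).le.trans (hweight _ _ (by omega))
end

section
/- Let n ≥ 2, m, and z be positive integers satisfying n²·z²·(1 − 1/n²)^m < 1. Then there exist z ordered partitions A_1, …, A_z of [m], each into n labeled parts A_{ℓ,1}, …, A_{ℓ,n}, satisfying the Intersecting Property: for all distinct i, j ∈ [n] and all distinct k, ℓ ∈ [z], A_{k,i} ∩ A_{ℓ,j} ≠ ∅. -/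
/-!
Colour every `x ∈ [m]` by a vector `c x ∈ [n]^z` and put `x` into `A_{ℓ, c x ℓ}`. For fixed
`i ≠ j` and `k ≠ ℓ`, a colour vector with `c k = i ∧ c ℓ = j` is hit by a proportion `1/n²` of
all vectors, so the colourings for which `A_{k,i} ∩ A_{ℓ,j}` stays empty form a proportion
`(1 - 1/n²)^m` of all colourings. Union-bounding over the fewer than `n²z²` quadruples
`(i, j, k, ℓ)` leaves a good colouring.
-/

open Finset

theorem exists_forall_exists_apply_mem_of_card_mul_pow_lt {σ β ι : Type*} [Fintype σ]
    [DecidableEq σ] [Fintype β] [DecidableEq β] [Nonempty β] (Q : Finset ι) (S : ι → Finset β)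
    {p : ℝ} (hS : ∀ q ∈ Q, (#(S q)ᶜ : ℝ) ≤ p * Fintype.card β)
    (hQ : #Q * p ^ Fintype.card σ < 1) :
    ∃ g : σ → β, ∀ q ∈ Q, ∃ x, g x ∈ S q := by
  by_contra! hbad
  have hcover :
      (univ : Finset (σ → β)) ⊆ Q.biUnion fun q => Fintype.piFinset fun _ => (S q)ᶜ := by
    intro g _
    obtain ⟨q, hq, hg⟩ := hbad g
    exact mem_biUnion.2 ⟨q, hq, Fintype.mem_piFinset.2 fun x => mem_compl.2 (hg x)⟩
  have hcount : (Fintype.card β : ℝ) ^ Fintype.card σ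
      ≤ #Q * p ^ Fintype.card σ * Fintype.card β ^ Fintype.card σ :=
    calc (Fintype.card β : ℝ) ^ Fintype.card σ = #(univ : Finset (σ → β)) := by simp
      _ ≤ #(Q.biUnion fun q => Fintype.piFinset fun _ => (S q)ᶜ) := by
        exact_mod_cast card_le_card hcover
      _ ≤ ∑ q ∈ Q, (#(Fintype.piFinset fun _ : σ => (S q)ᶜ) : ℝ) := by
        exact_mod_cast card_biUnion_le
      _ = ∑ q ∈ Q, (#(S q)ᶜ : ℝ) ^ Fintype.card σ := by simp [Fintype.card_piFinset]
      _ ≤ ∑ q ∈ Q, (p * Fintype.card β) ^ Fintype.card σ :=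
        sum_le_sum fun q hq => pow_le_pow_left₀ (Nat.cast_nonneg _) (hS q hq) _
      _ = _ := by rw [sum_const, nsmul_eq_mul, mul_pow, mul_assoc]
  have hpos : (0 : ℝ) < Fintype.card β ^ Fintype.card σ := by positivity
  nlinarith

section TwoCoordinates

variable {α β : Type*} [Fintype α] [DecidableEq α] [Fintype β] [DecidableEq β] {k ℓ : α}

theorem card_filter_apply_eq_and_apply_eq_mul (hkℓ : k ≠ ℓ) (i j : β) :
    #{h : α → β | h k = i ∧ h ℓ = j} * Fintype.card β ^ 2 =
      Fintype.card β ^ Fintype.card α := by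
  have hpi : ({h : α → β | h k = i ∧ h ℓ = j} : Finset _) =
      Fintype.piFinset
        (Function.update (Function.update (fun _ : α => (univ : Finset β)) k {i}) ℓ {j}) := by
    ext h
    simp only [mem_filter, mem_univ, true_and, Fintype.mem_piFinset]
    refine ⟨?_, fun hh => ⟨by simpa [hkℓ] using hh k, by simpa using hh ℓ⟩⟩
    rintro ⟨rfl, rfl⟩ x
    rcases eq_or_ne x ℓ with rfl | hxℓ
    · simp
    rcases eq_or_ne x k with rfl | hxk <;> simp [*]
  rw [hpi, Fintype.card_piFinset, ← prod_erase_mul _ _ (mem_univ ℓ),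
    ← prod_erase_mul _ _ (mem_erase.2 ⟨hkℓ, mem_univ k⟩),
    prod_congr rfl (g := fun _ => Fintype.card β) (fun x hx => by simp_all)]
  have : 1 < Fintype.card α := Fintype.one_lt_card_iff.2 ⟨k, ℓ, hkℓ⟩
  simp only [prod_const, Function.update_self, Function.update_of_ne hkℓ, card_singleton,
    mul_one, card_erase_of_mem (mem_erase.2 ⟨hkℓ, mem_univ k⟩), card_erase_of_mem (mem_univ _),
    card_univ, ← pow_add]
  congr 1
  omega

theorem card_compl_filter_apply_eq_and_apply_eq [Nonempty β] (hkℓ : k ≠ ℓ) (i j : β) :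
    (#({h : α → β | h k = i ∧ h ℓ = j} : Finset (α → β))ᶜ : ℝ) =
      (1 - 1 / (Fintype.card β : ℝ) ^ 2) * Fintype.card (α → β) := by
  have hcard : (#{h : α → β | h k = i ∧ h ℓ = j} : ℝ) * Fintype.card β ^ 2 =
      Fintype.card β ^ Fintype.card α := by
    exact_mod_cast card_filter_apply_eq_and_apply_eq_mul hkℓ i j
  have : (Fintype.card β : ℝ) ≠ 0 := by positivity
  rw [card_compl, Nat.cast_sub (card_le_univ _), Fintype.card_fun, Nat.cast_pow, ← hcard]
  field_simp

end TwoCoordinates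

theorem pairwise_disjoint_filter_and_biUnion_filter_eq_univ {σ ι : Type*} [Fintype σ]
    [Fintype ι] [DecidableEq σ] [DecidableEq ι] (f : σ → ι) :
    (∀ i j, i ≠ j → Disjoint (α := Finset σ) {x | f x = i} {x | f x = j}) ∧
      univ.biUnion (fun i => ({x | f x = i} : Finset σ)) = univ :=
  ⟨fun i j hij => by rw [disjoint_filter]; rintro x - rfl; exact hij,
    biUnion_filter_eq_of_maps_to fun _ _ => mem_univ _⟩

theorem exists_intersecting_partitions_general
    (n m z : ℕ) (hn : 2 ≤ n)
    (h : (n : ℝ) ^ 2 * (z : ℝ) ^ 2 * (1 - 1 / (n : ℝ) ^ 2) ^ m < 1) :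
    ∃ A : Fin z → Fin n → Finset (Fin m),
      (∀ ℓ, (∀ i j, i ≠ j → Disjoint (A ℓ i) (A ℓ j)) ∧
        Finset.univ.biUnion (A ℓ) = Finset.univ) ∧
      ∀ i j : Fin n, i ≠ j → ∀ k ℓ : Fin z, k ≠ ℓ → (A k i ∩ A ℓ j).Nonempty := by
  have : NeZero n := ⟨by omega⟩
  let Q : Finset ((Fin n × Fin n) × Fin z × Fin z) := {q | q.1.1 ≠ q.1.2 ∧ q.2.1 ≠ q.2.2}
  let S (q : (Fin n × Fin n) × Fin z × Fin z) : Finset (Fin z → Fin n) :=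
    {c | c q.2.1 = q.1.1 ∧ c q.2.2 = q.1.2}
  have hS : ∀ q ∈ Q, (#(S q)ᶜ : ℝ) ≤ (1 - 1 / (n : ℝ) ^ 2) * Fintype.card (Fin z → Fin n) :=
    fun q hq => by
      have := card_compl_filter_apply_eq_and_apply_eq (mem_filter.1 hq).2.2 q.1.1 q.1.2
      rw [Fintype.card_fin] at this
      exact this.le
  have hQ : (#Q : ℝ) * (1 - 1 / (n : ℝ) ^ 2) ^ Fintype.card (Fin m) < 1 := by
    have hQcard : (#Q : ℝ) ≤ n ^ 2 * z ^ 2 := by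
      exact_mod_cast (card_filter_le _ _).trans_eq (by simp [sq, mul_assoc])
    have hp : (0 : ℝ) ≤ 1 - 1 / (n : ℝ) ^ 2 := by
      rw [sub_nonneg, div_le_one (by positivity)]
      exact_mod_cast Nat.one_le_pow _ _ (by omega)
    rw [Fintype.card_fin]
    exact (mul_le_mul_of_nonneg_right hQcard (pow_nonneg hp m)).trans_lt h
  obtain ⟨g, hg⟩ := exists_forall_exists_apply_mem_of_card_mul_pow_lt Q S hS hQ
  refine ⟨fun ℓ i => {x | g x ℓ = i},
    fun ℓ => pairwise_disjoint_filter_and_biUnion_filter_eq_univ (g · ℓ),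
    fun i j hij k ℓ hkℓ => ?_⟩
  obtain ⟨x, hx⟩ := hg ((i, j), k, ℓ) (by simp [Q, hij, hkℓ])
  exact ⟨x, by simpa [S] using hx⟩

/-- If `n ≥ 2`, `m, z ≥ 1` and `n²·z²·(1 − 1/n²)^m < 1`, then there exist `z` ordered
partitions of `[m]` into `n` labeled parts satisfying the Intersecting Property:
`A_{k,i} ∩ A_{ℓ,j} ≠ ∅` for all distinct `i, j ∈ [n]` and distinct `k, ℓ ∈ [z]`. -/
theorem exists_intersecting_partitions
    (n m z : ℕ) (hn : 2 ≤ n) (hm : 0 < m) (hz : 0 < z)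
    (h : (n : ℝ) ^ 2 * (z : ℝ) ^ 2 * (1 - 1 / (n : ℝ) ^ 2) ^ m < 1) :
    ∃ A : Fin z → Fin n → Finset (Fin m),
      (∀ ℓ, (∀ i j, i ≠ j → Disjoint (A ℓ i) (A ℓ j)) ∧
        Finset.univ.biUnion (A ℓ) = Finset.univ) ∧
      ∀ i j : Fin n, i ≠ j → ∀ k ℓ : Fin z, k ≠ ℓ → (A k i ∩ A ℓ j).Nonempty :=
  exists_intersecting_partitions_general n m z hn h
end

section
/- Let M be a finite set and let A_1, …, A_z be ordered partitions of M into n labeled parts each, satisfying the Intersecting Property: for all distinct i, j ∈ [n] and all distinct k, ℓ ∈ [z], A_{k,i} ∩ A_{ℓ,j} ≠ ∅. Let X_1, …, X_n ⊆ [z] be pairwise disjoint, and for each i ∈ [n] define v_i : 2^M → ℝ by v_i(S) = 1[S ≠ ∅] + max_{ℓ∈X_i} 1[S ⊇ A_{ℓ,i}], where a maximum over an empty index set is 0. Then for every n-tuple (B_1, …, B_n) of pairwise disjoint subsets of M and all distinct i, j ∈ [n], v_i(B_i) + v_j(B_j) ≤ 3. -/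
theorem not_exists_subset_and_exists_subset {ι κ M : Type*} [DecidableEq M]
    {A : κ → ι → Finset M} {X : ι → Finset κ} {B : ι → Finset M} {i j : ι}
    (hint : ∀ k ℓ, k ≠ ℓ → (A k i ∩ A ℓ j).Nonempty)
    (hX : Disjoint (X i) (X j)) (hB : Disjoint (B i) (B j)) :
    ¬ ((∃ ℓ ∈ X i, A ℓ i ⊆ B i) ∧ (∃ ℓ ∈ X j, A ℓ j ⊆ B j)) := by
  rintro ⟨⟨k, hk, hki⟩, ⟨ℓ, hℓ, hℓj⟩⟩
  have hkℓ : k ≠ ℓ := fun h => Finset.disjoint_left.mp hX hk (h ▸ hℓ)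
  obtain ⟨x, hx⟩ := hint k ℓ hkℓ
  rw [Finset.mem_inter] at hx
  exact Finset.disjoint_left.mp hB (hki hx.1) (hℓj hx.2)

theorem ite_add_ite_add_ite_add_ite_le_three {R : Type*} [Semiring R] [PartialOrder R]
    [IsOrderedRing R] (p q r s : Prop) [Decidable p] [Decidable q] [Decidable r] [Decidable s]
    (hqs : ¬ (q ∧ s)) :
    (((if p then 1 else 0) + (if q then 1 else 0)) +
      ((if r then 1 else 0) + (if s then 1 else 0)) : R) ≤ 3 := by
  by_cases hq : q
  · have hs : ¬ s := fun hs => hqs ⟨hq, hs⟩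
    split_ifs <;> norm_num
  · split_ifs <;> norm_num

theorem kinda_additive_general
    {M : Type*} [DecidableEq M] (n z : ℕ)
    (A : Fin z → Fin n → Finset M)
    (hint : ∀ i j : Fin n, i ≠ j → ∀ k ℓ : Fin z, k ≠ ℓ → (A k i ∩ A ℓ j).Nonempty)
    (X : Fin n → Finset (Fin z)) (hX : ∀ i j, i ≠ j → Disjoint (X i) (X j))
    (B : Fin n → Finset M) (hB : ∀ i j, i ≠ j → Disjoint (B i) (B j))
    (i j : Fin n) (hij : i ≠ j) :
    (((if (B i).Nonempty then 1 else 0) + (if ∃ ℓ ∈ X i, A ℓ i ⊆ B i then 1 else 0)) +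
      ((if (B j).Nonempty then 1 else 0) + (if ∃ ℓ ∈ X j, A ℓ j ⊆ B j then 1 else 0)) : ℝ)
      ≤ 3 :=
  ite_add_ite_add_ite_add_ite_le_three _ _ _ _
    (not_exists_subset_and_exists_subset (hint i j hij) (hX i j hij) (hB i j hij))

/-- Given partitions `A_1, …, A_z` of `M` into `n` labeled parts satisfying the
Intersecting Property, pairwise disjoint sets `X_1, …, X_n ⊆ [z]`, and the valuations
`v_i(S) = 1[S ≠ ∅] + max_{ℓ∈X_i} 1[S ⊇ A_{ℓ,i}]`, for every allocation `(B_1, …, B_n)`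
of pairwise disjoint subsets of `M` and all distinct `i, j`,
`v_i(B_i) + v_j(B_j) ≤ 3`. -/
theorem kinda_additive
    {M : Type*} [Fintype M] [DecidableEq M] (n z : ℕ)
    (A : Fin z → Fin n → Finset M)
    (hpart : ∀ ℓ, (∀ i j, i ≠ j → Disjoint (A ℓ i) (A ℓ j)) ∧
      Finset.univ.biUnion (A ℓ) = Finset.univ)
    (hint : ∀ i j : Fin n, i ≠ j → ∀ k ℓ : Fin z, k ≠ ℓ → (A k i ∩ A ℓ j).Nonempty)
    (X : Fin n → Finset (Fin z)) (hX : ∀ i j, i ≠ j → Disjoint (X i) (X j))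
    (B : Fin n → Finset M) (hB : ∀ i j, i ≠ j → Disjoint (B i) (B j))
    (i j : Fin n) (hij : i ≠ j) :
    (((if (B i).Nonempty then 1 else 0) + (if ∃ ℓ ∈ X i, A ℓ i ⊆ B i then 1 else 0)) +
      ((if (B j).Nonempty then 1 else 0) + (if ∃ ℓ ∈ X j, A ℓ j ⊆ B j then 1 else 0)) : ℝ)
      ≤ 3 :=
  kinda_additive_general n z A hint X hX B hB i j hij
end

section
/- Let n ≥ 2 divide m, let k = m/n, let M = [m], and let λ ≥ 4 be an even integer. For each i ∈ [n] let X_i = (X_{i,1}, …, X_{i,z}) be a list of subsets of M satisfying: (a) |X_{i,ℓ}| = k for all i ∈ [n] and ℓ ∈ [z]; (b) for every ℓ ∈ [z], |X_{1,ℓ} ∩ ⋯ ∩ X_{n,ℓ}| = k − n; (c) each complement family X̄_i = (M∖X_{i,1}, …, M∖X_{i,z}) covers M and is λ-sparse, i.e. φ_{X̄_i}(M) > λ; (d) for every i ∈ [n] and every S ⊆ M with |S| ≤ nλ there exists ℓ ∈ [z] such that S ⊆ M∖X_{i,ℓ}. Let v_i = f_{X_i}. Then for every n-tuple (A_1, …,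 A_n) of pairwise disjoint subsets of M and all i, j ∈ [n] with i ≠ j, v_i(A_i) + v_j(A_j) ≤ λ + 2. -/
/-!
Write `φ_i` for the cover number with respect to `X̄_i`. Since `X_{a,ℓ}` and `X_{b,ℓ}` both
contain the common intersection of size `k − n`, each `X_{a,ℓ} ∖ X_{b,ℓ}` has at most `n`
elements. Hence if `L` is an optimal `X̄_b`-cover of `T` with `|L| ≤ λ`, the points of `T` that
the sets `M ∖ X_{a,ℓ}`, `ℓ ∈ L`, miss number at most `nλ` and fit into a single complement
`M ∖ X_{a,ℓ₀}`: so `φ_a(T) ≤ φ_b(T) + 1`.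

Sparsity gives `f_X(S) ≤ φ(S)`, and `f_X(S) ≤ λ/2` unless `φ(M∖S) < λ/2`, in which case
`f_X(S) = λ − φ(M∖S)`. If both bidders are in the first situation the sum is at most `λ`.
Otherwise, say `φ_i(M∖A_i) < λ/2`; as `A_j ⊆ M∖A_i`,
`v_j(A_j) ≤ φ_j(A_j) ≤ φ_j(M∖A_i) ≤ φ_i(M∖A_i) + 1`, and the sum is at most `λ + 1`.
-/

/-- `coverNum Y T` is the minimum number of sets from the family `Y` needed to cover `T`. -/
noncomputable def coverNum {α : Type*} [DecidableEq α] {z : ℕ}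
    (Y : Fin z → Finset α) (T : Finset α) : ℕ :=
  sInf {k | ∃ L : Finset (Fin z), L.card = k ∧ T ⊆ L.biUnion Y}

/-- The subadditive function `f_X` built from a list `X` of subsets of `[m]`; the
condition `φ(S) < λ/2` (for even `λ`) is expressed as `2·φ(S) < λ`. -/
noncomputable def fX {m z : ℕ} (X : Fin z → Finset (Fin m)) (lam : ℕ)
    (S : Finset (Fin m)) : ℝ :=
  if 2 * coverNum (fun ℓ => (X ℓ)ᶜ) S < lam then
    (coverNum (fun ℓ => (X ℓ)ᶜ) S : ℝ)
  else if 2 * coverNum (fun ℓ => (X ℓ)ᶜ) Sᶜ < lam then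
    (lam : ℝ) - coverNum (fun ℓ => (X ℓ)ᶜ) Sᶜ
  else (lam : ℝ) / 2

section coverNum

variable {α : Type*} [DecidableEq α] {z : ℕ}

theorem coverNum_le_card (Y : Fin z → Finset α) {T : Finset α} {L : Finset (Fin z)}
    (h : T ⊆ L.biUnion Y) : coverNum Y T ≤ L.card :=
  Nat.sInf_le ⟨L, rfl, h⟩

theorem exists_card_eq_coverNum (Y : Fin z → Finset α) {T : Finset α}
    (h : T ⊆ Finset.univ.biUnion Y) :
    ∃ L : Finset (Fin z), L.card = coverNum Y T ∧ T ⊆ L.biUnion Y :=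
  Nat.sInf_mem (s := {k | ∃ L : Finset (Fin z), L.card = k ∧ T ⊆ L.biUnion Y})
    ⟨_, Finset.univ, rfl, h⟩

theorem coverNum_mono (Y : Fin z → Finset α) {S T : Finset α} (hST : S ⊆ T)
    (hT : T ⊆ Finset.univ.biUnion Y) : coverNum Y S ≤ coverNum Y T := by
  obtain ⟨L, hL, hTL⟩ := exists_card_eq_coverNum Y hT
  exact hL ▸ coverNum_le_card Y (hST.trans hTL)

theorem coverNum_union_le (Y : Fin z → Finset α) {S T : Finset α}
    (hS : S ⊆ Finset.univ.biUnion Y) (hT : T ⊆ Finset.univ.biUnion Y) :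
    coverNum Y (S ∪ T) ≤ coverNum Y S + coverNum Y T := by
  obtain ⟨L, hL, hSL⟩ := exists_card_eq_coverNum Y hS
  obtain ⟨L', hL', hTL'⟩ := exists_card_eq_coverNum Y hT
  calc coverNum Y (S ∪ T) ≤ (L ∪ L').card := by
        apply coverNum_le_card
        rw [Finset.union_biUnion]
        exact Finset.union_subset_union hSL hTL'
    _ ≤ L.card + L'.card := Finset.card_union_le _ _
    _ = coverNum Y S + coverNum Y T := by rw [hL, hL']

theorem coverNum_univ_le_add_compl [Fintype α] (Y : Fin z → Finset α)
    (hY : Finset.univ.biUnion Y = Finset.univ) (S : Finset α) :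
    coverNum Y Finset.univ ≤ coverNum Y S + coverNum Y Sᶜ := by
  rw [← Finset.union_compl S]
  exact coverNum_union_le Y (hY ▸ Finset.subset_univ S) (hY ▸ Finset.subset_univ Sᶜ)

theorem coverNum_le_coverNum_add_one (U V : Fin z → Finset α) (d r : ℕ)
    (hdiff : ∀ ℓ, (V ℓ \ U ℓ).card ≤ d) (hsmall : ∀ S : Finset α, S.card ≤ d * r → ∃ ℓ, S ⊆ U ℓ)
    {T : Finset α} (hT : T ⊆ Finset.univ.biUnion V) (hr : coverNum V T ≤ r) :
    coverNum U T ≤ coverNum V T + 1 := by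
  obtain ⟨L, hL, hTL⟩ := exists_card_eq_coverNum V hT
  have hmissed : (L.biUnion fun ℓ => V ℓ \ U ℓ).card ≤ d * r :=
    calc _ ≤ L.card * d := Finset.card_biUnion_le_card_mul L _ d fun ℓ _ => hdiff ℓ
      _ ≤ d * r := by rw [mul_comm]; exact Nat.mul_le_mul_left d (hL ▸ hr)
  obtain ⟨ℓ₀, hℓ₀⟩ := hsmall _ hmissed
  have hcover : T ⊆ (insert ℓ₀ L).biUnion U := by
    intro x hx
    obtain ⟨ℓ, hℓL, hxV⟩ := Finset.mem_biUnion.mp (hTL hx)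
    by_cases hxU : x ∈ U ℓ
    · exact Finset.mem_biUnion.mpr ⟨ℓ, Finset.mem_insert_of_mem hℓL, hxU⟩
    · exact Finset.mem_biUnion.mpr ⟨ℓ₀, Finset.mem_insert_self _ _,
        hℓ₀ (Finset.mem_biUnion.mpr ⟨ℓ, hℓL, Finset.mem_sdiff.mpr ⟨hxV, hxU⟩⟩)⟩
  calc coverNum U T ≤ (insert ℓ₀ L).card := coverNum_le_card U hcover
    _ ≤ L.card + 1 := Finset.card_insert_le _ _
    _ = coverNum V T + 1 := by rw [hL]

end coverNum

theorem card_sdiff_add_card_inf_le {ι α : Type*} [Fintype ι] [Fintype α] [DecidableEq α]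
    (F : ι → Finset α) (a b : ι) :
    (F a \ F b).card + (Finset.univ.inf F).card ≤ (F a).card := by
  have hinf : ∀ c, Finset.univ.inf F ⊆ F c := fun c => Finset.inf_le (Finset.mem_univ c)
  have hdisj : Disjoint (F a \ F b) (Finset.univ.inf F) :=
    Finset.disjoint_of_subset_right (hinf b) Finset.sdiff_disjoint
  rw [← Finset.card_union_of_disjoint hdisj]
  exact Finset.card_le_card (Finset.union_subset Finset.sdiff_subset (hinf a))

section fX

variable {m z : ℕ} {X : Fin z → Finset (Fin m)} {lam : ℕ}

theorem fX_le_coverNum (hcov : Finset.univ.biUnion (fun ℓ => (X ℓ)ᶜ) = Finset.univ)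
    (hsparse : lam < coverNum (fun ℓ => (X ℓ)ᶜ) Finset.univ) (S : Finset (Fin m)) :
    fX X lam S ≤ coverNum (fun ℓ => (X ℓ)ᶜ) S := by
  have hsum : (lam : ℝ) < coverNum (fun ℓ => (X ℓ)ᶜ) S + coverNum (fun ℓ => (X ℓ)ᶜ) Sᶜ := by
    exact_mod_cast hsparse.trans_le (coverNum_univ_le_add_compl _ hcov S)
  unfold fX
  split_ifs with hS
  · exact le_rfl
  · linarith
  · have : (lam : ℝ) ≤ 2 * coverNum (fun ℓ => (X ℓ)ᶜ) S := by exact_mod_cast not_lt.mp hS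
    linarith

theorem fX_eq_sub_coverNum_compl (hcov : Finset.univ.biUnion (fun ℓ => (X ℓ)ᶜ) = Finset.univ)
    (hsparse : lam < coverNum (fun ℓ => (X ℓ)ᶜ) Finset.univ) {S : Finset (Fin m)}
    (hSc : 2 * coverNum (fun ℓ => (X ℓ)ᶜ) Sᶜ < lam) :
    fX X lam S = lam - coverNum (fun ℓ => (X ℓ)ᶜ) Sᶜ := by
  have hsum := hsparse.trans_le (coverNum_univ_le_add_compl _ hcov S)
  have hS : ¬ 2 * coverNum (fun ℓ => (X ℓ)ᶜ) S < lam := by omega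
  rw [fX, if_neg hS, if_pos hSc]

theorem fX_le_half {S : Finset (Fin m)} (hSc : lam ≤ 2 * coverNum (fun ℓ => (X ℓ)ᶜ) Sᶜ) :
    fX X lam S ≤ lam / 2 := by
  unfold fX
  split_ifs with hS hSc'
  · have : 2 * (coverNum (fun ℓ => (X ℓ)ᶜ) S : ℝ) < lam := by exact_mod_cast hS
    linarith
  · omega
  · exact le_rfl

end fX

theorem almost_perfectly_additive_general
    (n m z : ℕ) (k : ℕ) (lam : ℕ)
    (X : Fin n → Fin z → Finset (Fin m))
    (ha : ∀ i ℓ, (X i ℓ).card = k)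
    (hb : ∀ ℓ : Fin z, ((Finset.univ.inf (fun i : Fin n => X i ℓ)).card : ℤ) = (k : ℤ) - n)
    (hc : ∀ i : Fin n,
      Finset.univ.biUnion (fun ℓ => (X i ℓ)ᶜ) = (Finset.univ : Finset (Fin m)) ∧
      lam < coverNum (fun ℓ => (X i ℓ)ᶜ) Finset.univ)
    (hd : ∀ i : Fin n, ∀ S : Finset (Fin m), S.card ≤ n * lam →
      ∃ ℓ : Fin z, S ⊆ (X i ℓ)ᶜ)
    (A : Fin n → Finset (Fin m)) (hA : ∀ i j, i ≠ j → Disjoint (A i) (A j))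
    (i j : Fin n) (hij : i ≠ j) :
    fX (X i) lam (A i) + fX (X j) lam (A j) ≤ (lam : ℝ) + 2 := by
  have htransfer : ∀ a b T, coverNum (fun ℓ => (X b ℓ)ᶜ) T ≤ lam →
      coverNum (fun ℓ => (X a ℓ)ᶜ) T ≤ coverNum (fun ℓ => (X b ℓ)ᶜ) T + 1 := by
    refine fun a b T => coverNum_le_coverNum_add_one _ _ n lam (fun ℓ => ?_) (hd a)
      ((hc b).1 ▸ Finset.subset_univ T)
    have hsdiff := card_sdiff_add_card_inf_le (fun t => X t ℓ) a b
    have hXa := ha a ℓ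
    have hinf := hb ℓ
    rw [compl_sdiff_compl]
    omega
  have hsum_of_low : ∀ a b, a ≠ b → 2 * coverNum (fun ℓ => (X a ℓ)ᶜ) (A a)ᶜ < lam →
      fX (X a) lam (A a) + fX (X b) lam (A b) ≤ lam + 2 := by
    intro a b hab hlow
    have hAb : A b ⊆ (A a)ᶜ := Finset.subset_compl_iff_disjoint_right.mpr (hA b a hab.symm)
    have hφb : (coverNum (fun ℓ => (X b ℓ)ᶜ) (A b) : ℝ) ≤
        coverNum (fun ℓ => (X a ℓ)ᶜ) (A a)ᶜ + 1 := by
      exact_mod_cast (coverNum_mono _ hAb ((hc b).1 ▸ Finset.subset_univ _)).trans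
        (htransfer b a _ (by omega))
    have hvb := fX_le_coverNum (hc b).1 (hc b).2 (A b)
    rw [fX_eq_sub_coverNum_compl (hc a).1 (hc a).2 hlow]
    linarith
  by_cases hi : 2 * coverNum (fun ℓ => (X i ℓ)ᶜ) (A i)ᶜ < lam
  · exact hsum_of_low i j hij hi
  by_cases hj : 2 * coverNum (fun ℓ => (X j ℓ)ᶜ) (A j)ᶜ < lam
  · rw [add_comm]
    exact hsum_of_low j i hij.symm hj
  have hvi := fX_le_half (not_lt.mp hi)
  have hvj := fX_le_half (not_lt.mp hj)
  linarith

/-- Under the promises of the `∃FarSets` problem in a 0-instance (all `X_{i,ℓ}` of size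
`k = m/n`, all intersections `X_{1,ℓ} ∩ ⋯ ∩ X_{n,ℓ}` of size `k − n`, each complement
family covering `[m]` and `λ`-sparse, and every set of size at most `nλ` contained in
some complement), for every allocation of pairwise disjoint sets and all distinct
bidders `i ≠ j`, `f_{X_i}(A_i) + f_{X_j}(A_j) ≤ λ + 2`. -/
theorem almost_perfectly_additive
    (n m z : ℕ) (hn : 2 ≤ n) (hnm : n ∣ m) (k : ℕ) (hk : k = m / n)
    (lam : ℕ) (hlam : 4 ≤ lam) (hEven : Even lam)
    (X : Fin n → Fin z → Finset (Fin m))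
    (ha : ∀ i ℓ, (X i ℓ).card = k)
    (hb : ∀ ℓ : Fin z, ((Finset.univ.inf (fun i : Fin n => X i ℓ)).card : ℤ) = (k : ℤ) - n)
    (hc : ∀ i : Fin n,
      Finset.univ.biUnion (fun ℓ => (X i ℓ)ᶜ) = (Finset.univ : Finset (Fin m)) ∧
      lam < coverNum (fun ℓ => (X i ℓ)ᶜ) Finset.univ)
    (hd : ∀ i : Fin n, ∀ S : Finset (Fin m), S.card ≤ n * lam →
      ∃ ℓ : Fin z, S ⊆ (X i ℓ)ᶜ)
    (A : Fin n → Finset (Fin m)) (hA : ∀ i j, i ≠ j → Disjoint (A i) (A j))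
    (i j : Fin n) (hij : i ≠ j) :
    fX (X i) lam (A i) + fX (X j) lam (A j) ≤ (lam : ℝ) + 2 :=
  almost_perfectly_additive_general n m z k lam X ha hb hc hd A hA i j hij
end

section
/- Let n ≥ 2 and k ≥ n + 1 be integers with k ≡ 1 (mod n), let m = kn, and let p_1, …, p_{k(n−1)+1} be nonnegative reals. Define s = Σ_{j=1}^{(k−1)(n−1)} |(p_j − p_{j+n}) · Π_{i=1}^{n−1} p_{j+i}|. Then for all integers i with 2 ≤ i ≤ n and j with 1 ≤ j ≤ k−1 such that jn + i ≤ k(n−1) + 1, (p_i − p_{jn+i}) · Π_{ℓ∈[n], ℓ≠i} p_ℓ ≤ m·n·s. -/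
/-!
With the window products `q a = p a * ⋯ * p (a + n - 1)`, the summands of `s` are
`|q c - q (c + 1)|`, so by telescoping every window in range lies within `s` of
`u = q 1 = p i * C`, where `C = ∏_{ℓ ≠ i} p ℓ`. Shifting a window gives
`p (a + n) * q a = p a * q (a + 1)`, so along `a = i, i + n, …, i + j n` the quantity
`p a * C` is multiplied at each step by `q (a + 1) / q a ≥ (u - s) / (u + s)`, which costs at
most `2 s` below `u` per step. Hence `(p i - p (j n + i)) * C ≤ 2 j s ≤ k n · n · s`.
-/

open Finset

def windowProd {M : Type*} [CommMonoid M] (p : ℕ → M) (n a : ℕ) : M :=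
  ∏ r ∈ range n, p (a + r)

section windowProd

variable {M : Type*} [CommMonoid M] (p : ℕ → M) (n a : ℕ)

theorem windowProd_succ : windowProd p (n + 1) a = windowProd p n a * p (a + n) :=
  prod_range_succ _ _

theorem windowProd_succ' : windowProd p (n + 1) a = p a * windowProd p n (a + 1) := by
  simp only [windowProd, prod_range_succ', add_zero, mul_comm (p a)]
  simp only [add_comm, add_left_comm]

theorem mul_windowProd_add_one : p a * windowProd p n (a + 1) = p (a + n) * windowProd p n a := by
  rw [← windowProd_succ', windowProd_succ, mul_comm]

theorem prod_Icc_one_eq_windowProd : ∏ r ∈ Icc 1 n, p (a + r) = windowProd p n (a + 1) := by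
  rw [← Ico_add_one_right_eq_Icc, prod_Ico_eq_prod_range, windowProd]
  simp only [Nat.add_sub_cancel, add_assoc]

end windowProd

theorem sub_mul_prod_Icc_eq_windowProd_sub {R : Type*} [CommRing R] (p : ℕ → R) {n : ℕ}
    (hn : 0 < n) (a : ℕ) :
    (p a - p (a + n)) * ∏ r ∈ Icc 1 (n - 1), p (a + r) =
      windowProd p n a - windowProd p n (a + 1) := by
  obtain ⟨d, rfl⟩ : ∃ d, n = d + 1 := ⟨n - 1, by omega⟩
  rw [Nat.add_sub_cancel, prod_Icc_one_eq_windowProd, windowProd_succ', windowProd_succ,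
    add_assoc, add_comm 1 d]
  ring

theorem dist_le_sum_Icc_dist {α : Type*} [PseudoMetricSpace α] (f : ℕ → α) {b a N : ℕ}
    (hba : b ≤ a) (haN : a ≤ N + 1) :
    dist (f b) (f a) ≤ ∑ c ∈ Icc b N, dist (f c) (f (c + 1)) :=
  (dist_le_Ico_sum_dist f hba).trans <|
    sum_le_sum_of_subset_of_nonneg (fun c hc => by simp only [mem_Ico, mem_Icc] at hc ⊢; omega)
      fun _ _ _ => dist_nonneg

theorem sub_sub_two_mul_le_of_mul_eq_mul {u s c x y Q R : ℝ} (hc : 0 ≤ c) (hx : 0 ≤ x)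
    (hy : 0 ≤ y) (hQ : |u - Q| ≤ s) (hR : |u - R| ≤ s) (hxy : y * Q = x * R) (h : u - c ≤ x) :
    u - c - 2 * s ≤ y := by
  by_contra! hlt
  -- `(u - c) (u - s) ≥ (u - c - 2 s) (u + s)` because `c, s ≥ 0`
  have hs : 0 ≤ s := (abs_nonneg _).trans hQ
  rw [abs_le] at hQ hR
  have : (u - c - 2 * s) * (u + s) ≤ y * (u + s) := by
    nlinarith [mul_le_mul h (show u - s ≤ R by linarith) (by linarith) hx]
  nlinarith

theorem sub_two_mul_le_of_mul_eq_mul {x Q R : ℕ → ℝ} {u s : ℝ} {j : ℕ} (h0 : u ≤ x 0)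
    (hx : ∀ t ≤ j, 0 ≤ x t) (hQ : ∀ t < j, |u - Q t| ≤ s) (hR : ∀ t < j, |u - R t| ≤ s)
    (hxQR : ∀ t < j, x (t + 1) * Q t = x t * R t) :
    u - 2 * j * s ≤ x j := by
  induction j with
  | zero => simpa using h0
  | succ j ih =>
    have hs : 0 ≤ s := (abs_nonneg _).trans (hQ j j.lt_add_one)
    have := sub_sub_two_mul_le_of_mul_eq_mul (by positivity) (hx j (by omega))
      (hx (j + 1) le_rfl) (hQ j j.lt_add_one) (hR j j.lt_add_one) (hxQR j j.lt_add_one)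
      (ih (fun t ht => hx t (by omega)) (fun t ht => hQ t (by omega))
        (fun t ht => hR t (by omega)) (fun t ht => hxQR t (by omega)))
    push_cast
    linarith

theorem chaining_inequality_general
    (n k : ℕ)
    (p : ℕ → ℝ) (hp : ∀ j, 1 ≤ j → j ≤ k * (n - 1) + 1 → 0 ≤ p j)
    (s : ℝ)
    (hs : s = ∑ j ∈ Finset.Icc 1 ((k - 1) * (n - 1)),
      |(p j - p (j + n)) * ∏ i ∈ Finset.Icc 1 (n - 1), p (j + i)|)
    (i : ℕ) (hi2 : 2 ≤ i) (hin : i ≤ n)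
    (j : ℕ) (hji : j * n + i ≤ k * (n - 1) + 1) :
    (p i - p (j * n + i)) * ∏ ℓ ∈ (Finset.Icc 1 n).erase i, p ℓ ≤
      ((k * n : ℕ) : ℝ) * n * s := by
  have hk : 1 ≤ k := by rcases k with _ | k <;> simp at hji ⊢; omega
  have hkn : (k - 1) * (n - 1) + (n - 1) = k * (n - 1) := by
    rw [← Nat.succ_mul, Nat.succ_eq_add_one, Nat.sub_add_cancel hk]
  have hjk : j < k := by nlinarith [Nat.sub_add_cancel (show 1 ≤ n by omega)]
  set q := windowProd p n
  have hs' : s = ∑ c ∈ Icc 1 ((k - 1) * (n - 1)), dist (q c) (q (c + 1)) := by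
    simp only [hs, sub_mul_prod_Icc_eq_windowProd_sub p (show 0 < n by omega), Real.dist_eq, q]
  have hnear : ∀ a, 1 ≤ a → a + n ≤ k * (n - 1) + 2 → |q 1 - q a| ≤ s := fun a ha1 ha2 =>
    hs' ▸ Real.dist_eq _ _ ▸ dist_le_sum_Icc_dist q ha1 (by omega)
  set C := ∏ ℓ ∈ (Icc 1 n).erase i, p ℓ
  have hC : 0 ≤ C := prod_nonneg fun ℓ hℓ => by
    obtain ⟨hℓ1, hℓn⟩ := mem_Icc.mp (mem_of_mem_erase hℓ)
    exact hp ℓ hℓ1 (by omega)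
  have hq1 : q 1 = p i * C := by
    rw [mul_prod_erase _ _ (mem_Icc.mpr ⟨by omega, hin⟩)]
    simpa using (prod_Icc_one_eq_windowProd p n 0).symm
  have hx : q 1 - 2 * j * s ≤ p (j * n + i) * C :=
    sub_two_mul_le_of_mul_eq_mul (x := fun t => p (t * n + i) * C) (Q := fun t => q (t * n + i))
      (R := fun t => q (t * n + i + 1)) (by simp [hq1])
      (fun t ht => mul_nonneg (hp _ (by omega) (by nlinarith)) hC)
      (fun t ht => hnear _ (by omega) (by nlinarith))
      (fun t ht => hnear _ (by omega) (by nlinarith))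
      (fun t _ => by
        rw [add_one_mul, add_right_comm]
        linear_combination (-C) * mul_windowProd_add_one p n (t * n + i))
  have h2j : (2 * j : ℝ) ≤ ((k * n : ℕ) : ℝ) * n := by
    have : k * 2 * 2 ≤ k * n * n := Nat.mul_le_mul (Nat.mul_le_mul_left k (by omega)) (by omega)
    exact_mod_cast (show 2 * j ≤ k * n * n by omega)
  calc (p i - p (j * n + i)) * C = q 1 - p (j * n + i) * C := by rw [hq1]; ring
    _ ≤ 2 * j * s := by linarith
    _ ≤ ((k * n : ℕ) : ℝ) * n * s :=
      mul_le_mul_of_nonneg_right h2j (hs' ▸ sum_nonneg fun _ _ => dist_nonneg)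

/-- For `n ≥ 2`, `k ≥ n+1` with `k ≡ 1 (mod n)`, `m = kn`, nonnegative reals
`p_1, …, p_{k(n−1)+1}`, and
`s = Σ_{j=1}^{(k−1)(n−1)} |(p_j − p_{j+n}) · Π_{i=1}^{n−1} p_{j+i}|`,
for all `2 ≤ i ≤ n` and `1 ≤ j ≤ k−1` with `jn + i ≤ k(n−1)+1`,
`(p_i − p_{jn+i}) · Π_{ℓ∈[n], ℓ≠i} p_ℓ ≤ m·n·s`. -/
theorem chaining_inequality
    (n k : ℕ) (hn : 2 ≤ n) (hk : n + 1 ≤ k) (hmod : k % n = 1)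
    (p : ℕ → ℝ) (hp : ∀ j, 1 ≤ j → j ≤ k * (n - 1) + 1 → 0 ≤ p j)
    (s : ℝ)
    (hs : s = ∑ j ∈ Finset.Icc 1 ((k - 1) * (n - 1)),
      |(p j - p (j + n)) * ∏ i ∈ Finset.Icc 1 (n - 1), p (j + i)|)
    (i : ℕ) (hi2 : 2 ≤ i) (hin : i ≤ n)
    (j : ℕ) (hj1 : 1 ≤ j) (hjk : j ≤ k - 1) (hji : j * n + i ≤ k * (n - 1) + 1) :
    (p i - p (j * n + i)) * ∏ ℓ ∈ (Finset.Icc 1 n).erase i, p ℓ ≤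
      ((k * n : ℕ) : ℝ) * n * s :=
  chaining_inequality_general n k p hp s hs i hi2 hin j hji
end

section
/- Let n ≥ 2 and k ≥ n + 1 be integers with k ≡ 1 (mod n), let m = kn, let p_1, …, p_{k(n−1)+1} be nonnegative reals, and set s = Σ_{j=1}^{(k−1)(n−1)} |(p_j − p_{j+n}) · Π_{i=1}^{n−1} p_{j+i}|. Assume s > 0 and Π_{ℓ=1}^{n} p_ℓ ≥ m·s. Define q_1, …, q_{k(n−1)+1} recursively by q_j = p_j for 1 ≤ j ≤ n and q_j = q_{j−n} − s / Π_{ℓ=1}^{n−1} q_{j−ℓ} for n < j ≤ k(n−1)+1. Then 0 < q_j ≤ p_j for every j with 1 ≤ j ≤ k(n−1)+1. -/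
/-!
Let `D_j = ∏_{ℓ=1}^{n-1} q_{j-ℓ}` be the denominator of the recursion and `W_j = q_j D_j` the
product of the `n` consecutive terms ending at `j`. Multiplying the recursion by `D_j` gives
`W_j = q_{j-n} D_j - s = W_{j-1} - s`, so `W_j = ∏_{ℓ=1}^n p_ℓ - (j-n) s`, which stays positive up
to `j = k(n-1)+1` because `(k-1)(n-1) < kn`; with `D_j > 0` this gives `q_j > 0`. For `q_j ≤ p_j`,
the `(j-n)`-th summand of `s` bounds `(p_{j-n} - p_j) ∏_ℓ p_{j-ℓ}`, and `∏_ℓ p_{j-ℓ} ≥ D_j > 0`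
inductively, so `q_j = q_{j-n} - s / D_j ≤ p_{j-n} - (p_{j-n} - p_j) = p_j`.
-/

open Finset

section

variable {M : Type*} [CommMonoid M]

def window (n : ℕ) (f : ℕ → M) (j : ℕ) : M := ∏ ℓ ∈ range n, f (j - ℓ)

theorem prod_Icc_one_sub_eq_prod_range (f : ℕ → M) (j m : ℕ) :
    ∏ ℓ ∈ Icc 1 m, f (j - ℓ) = ∏ ℓ ∈ range m, f (j - 1 - ℓ) := by
  refine prod_nbij' (· - 1) (· + 1) ?_ ?_ ?_ ?_ ?_ <;> intro i hi <;>
    simp only [mem_Icc, mem_range] at hi ⊢ <;> first | omega | congr 1; omega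

theorem window_eq_mul (f : ℕ → M) {n : ℕ} (hn : n ≠ 0) (j : ℕ) :
    window n f j = f j * ∏ ℓ ∈ Icc 1 (n - 1), f (j - ℓ) := by
  obtain ⟨m, rfl⟩ := Nat.exists_eq_succ_of_ne_zero hn
  simp [window, prod_range_succ', prod_Icc_one_sub_eq_prod_range, Nat.sub_sub, mul_comm, add_comm]

theorem window_sub_one_eq_mul (f : ℕ → M) {n : ℕ} (hn : n ≠ 0) (j : ℕ) :
    window n f (j - 1) = f (j - n) * ∏ ℓ ∈ Icc 1 (n - 1), f (j - ℓ) := by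
  obtain ⟨m, rfl⟩ := Nat.exists_eq_succ_of_ne_zero hn
  simp [window, prod_range_succ, prod_Icc_one_sub_eq_prod_range, Nat.sub_sub, mul_comm, add_comm]

theorem window_self (f : ℕ → M) (n : ℕ) : window n f n = ∏ i ∈ Icc 1 n, f i := by
  refine prod_nbij' (n - ·) (n - ·) ?_ ?_ ?_ ?_ ?_ <;> intro i hi <;>
    simp only [mem_Icc, mem_range] at hi ⊢ <;> omega

theorem prod_Icc_one_add_eq_prod_Icc_one_sub (f : ℕ → M) (a n : ℕ) :
    ∏ i ∈ Icc 1 (n - 1), f (a + i) = ∏ ℓ ∈ Icc 1 (n - 1), f (a + n - ℓ) := by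
  refine prod_nbij' (n - ·) (n - ·) ?_ ?_ ?_ ?_ ?_ <;> intro i hi <;>
    simp only [mem_Icc] at hi ⊢ <;> first | omega | congr 1; omega

end

theorem pos_of_prod_pos {ι R : Type*} [CommMonoidWithZero R] [PartialOrder R] {t : Finset ι}
    {f : ι → R} (h0 : ∀ i ∈ t, 0 ≤ f i) (hpos : 0 < ∏ i ∈ t, f i) {i : ι} (hi : i ∈ t) :
    0 < f i :=
  (h0 i hi).lt_of_ne fun h => hpos.ne' (prod_eq_zero hi h.symm)

theorem sub_div_le_of_sub_mul_le {a b x s Q P : ℝ} (hs : 0 < s) (hQ : 0 < Q) (hQP : Q ≤ P)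
    (h : (a - b) * P ≤ s) (hx : x ≤ a) : x - s / Q ≤ b := by
  suffices a - b ≤ s / Q by linarith
  rcases le_or_gt (a - b) 0 with hab | hab
  · exact hab.trans (div_pos hs hQ).le
  · exact (le_div_iff₀ hQ).2 ((mul_le_mul_of_nonneg_left hQP hab.le).trans h)

theorem window_eq_window_sub_one_sub {n j : ℕ} (hn : n ≠ 0) {q : ℕ → ℝ} {s : ℝ}
    (hD : ∏ ℓ ∈ Icc 1 (n - 1), q (j - ℓ) ≠ 0)
    (hq : q j = q (j - n) - s / ∏ ℓ ∈ Icc 1 (n - 1), q (j - ℓ)) :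
    window n q j = window n q (j - 1) - s := by
  rw [window_eq_mul q hn, window_sub_one_eq_mul q hn, hq, sub_mul, div_mul_cancel₀ _ hD]

theorem chain_bounds_and_window {n N : ℕ} {p q : ℕ → ℝ} {s : ℝ} (hn : n ≠ 0)
    (hp : ∀ ℓ ∈ Icc 1 n, 0 ≤ p ℓ) (hspos : 0 < s)
    (hC : ((N - n : ℕ) : ℝ) * s < ∏ ℓ ∈ Icc 1 n, p ℓ)
    (hs : ∀ j, n < j → j ≤ N → (p (j - n) - p j) * ∏ ℓ ∈ Icc 1 (n - 1), p (j - ℓ) ≤ s)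
    (hq1 : ∀ j, 1 ≤ j → j ≤ n → q j = p j)
    (hq2 : ∀ j, n < j → j ≤ N → q j = q (j - n) - s / ∏ ℓ ∈ Icc 1 (n - 1), q (j - ℓ))
    (j : ℕ) (hj1 : 1 ≤ j) (hjN : j ≤ N) :
    (0 < q j ∧ q j ≤ p j) ∧
      (n ≤ j → window n q j = ∏ ℓ ∈ Icc 1 n, p ℓ - ((j - n : ℕ) : ℝ) * s) := by
  induction j using Nat.strong_induction_on with
  | _ j ih =>
  set C := ∏ ℓ ∈ Icc 1 n, p ℓ
  rcases le_or_gt j n with hjn | hjn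
  · have hCpos : 0 < C := lt_of_le_of_lt (by positivity) hC
    refine ⟨⟨?_, (hq1 j hj1 hjn).le⟩, fun hnj => ?_⟩
    · rw [hq1 j hj1 hjn]
      exact pos_of_prod_pos hp hCpos (mem_Icc.2 ⟨hj1, hjn⟩)
    · obtain rfl : j = n := le_antisymm hjn hnj
      rw [window_self, Nat.sub_self, Nat.cast_zero, zero_mul, sub_zero]
      exact prod_congr rfl fun i hi => hq1 i (mem_Icc.1 hi).1 (mem_Icc.1 hi).2
  set D := ∏ ℓ ∈ Icc 1 (n - 1), q (j - ℓ)
  have hprev : ∀ ℓ ∈ Icc 1 (n - 1), 0 < q (j - ℓ) ∧ q (j - ℓ) ≤ p (j - ℓ) := fun ℓ hℓ => by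
    rw [mem_Icc] at hℓ
    exact (ih (j - ℓ) (by omega) (by omega) (by omega)).1
  have hD : 0 < D := prod_pos fun ℓ hℓ => (hprev ℓ hℓ).1
  have hW : window n q j = C - ((j - n : ℕ) : ℝ) * s := by
    rw [window_eq_window_sub_one_sub hn hD.ne' (hq2 j hjn hjN),
      (ih (j - 1) (by omega) (by omega) (by omega)).2 (by omega),
      show j - n = j - 1 - n + 1 by omega]
    push_cast
    ring
  have hWpos : 0 < window n q j := by
    have : ((j - n : ℕ) : ℝ) ≤ ((N - n : ℕ) : ℝ) := by exact_mod_cast Nat.sub_le_sub_right hjN n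
    rw [hW]
    linarith [mul_le_mul_of_nonneg_right this hspos.le]
  refine ⟨⟨?_, ?_⟩, fun _ => hW⟩
  · rw [window_eq_mul q hn] at hWpos
    exact pos_of_mul_pos_left hWpos hD.le
  · rw [hq2 j hjn hjN]
    refine sub_div_le_of_sub_mul_le hspos hD ?_ (hs j hjn hjN)
      (ih (j - n) (by omega) (by omega) (by omega)).1.2
    exact prod_le_prod (fun ℓ hℓ => (hprev ℓ hℓ).1.le) fun ℓ hℓ => (hprev ℓ hℓ).2

theorem single_bounds_general
    (n k : ℕ) (hn : 2 ≤ n) (hk : n + 1 ≤ k)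
    (p : ℕ → ℝ) (hp : ∀ j, 1 ≤ j → j ≤ k * (n - 1) + 1 → 0 ≤ p j)
    (s : ℝ)
    (hs : s = ∑ j ∈ Finset.Icc 1 ((k - 1) * (n - 1)),
      |(p j - p (j + n)) * ∏ i ∈ Finset.Icc 1 (n - 1), p (j + i)|)
    (hspos : 0 < s)
    (hprod : ((k * n : ℕ) : ℝ) * s ≤ ∏ ℓ ∈ Finset.Icc 1 n, p ℓ)
    (q : ℕ → ℝ)
    (hq1 : ∀ j, 1 ≤ j → j ≤ n → q j = p j)
    (hq2 : ∀ j, n < j → j ≤ k * (n - 1) + 1 →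
      q j = q (j - n) - s / ∏ ℓ ∈ Finset.Icc 1 (n - 1), q (j - ℓ))
    (j : ℕ) (hj1 : 1 ≤ j) (hj2 : j ≤ k * (n - 1) + 1) :
    0 < q j ∧ q j ≤ p j := by
  have hlen : k * (n - 1) + 1 - n = (k - 1) * (n - 1) := by
    obtain ⟨k, rfl⟩ := Nat.exists_eq_add_one_of_ne_zero (by omega : k ≠ 0)
    rw [Nat.add_sub_cancel, add_mul, one_mul]
    omega
  have hkn : k * (n - 1) + k = k * n := by
    rw [← Nat.mul_add_one, Nat.sub_add_cancel (by omega)]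
  have hterm : ∀ j, n < j → j ≤ k * (n - 1) + 1 →
      (p (j - n) - p j) * ∏ ℓ ∈ Icc 1 (n - 1), p (j - ℓ) ≤ s := fun j hnj hjN => by
    have hmem : j - n ∈ Icc 1 ((k - 1) * (n - 1)) := mem_Icc.2 ⟨by omega, by omega⟩
    rw [hs]
    refine le_trans ?_ (single_le_sum (fun i _ => abs_nonneg _) hmem)
    rw [prod_Icc_one_add_eq_prod_Icc_one_sub, Nat.sub_add_cancel hnj.le]
    exact le_abs_self _
  have hC : ((k * (n - 1) + 1 - n : ℕ) : ℝ) * s < ∏ ℓ ∈ Icc 1 n, p ℓ := by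
    refine lt_of_lt_of_le (mul_lt_mul_of_pos_right ?_ hspos) hprod
    exact_mod_cast (by omega : k * (n - 1) + 1 - n < k * n)
  have hmul : n - 1 ≤ k * (n - 1) := Nat.le_mul_of_pos_left (n - 1) (by omega)
  have hp' : ∀ ℓ ∈ Icc 1 n, 0 ≤ p ℓ := fun ℓ hℓ => by
    obtain ⟨h1, h2⟩ := mem_Icc.1 hℓ
    exact hp ℓ h1 (by omega)
  exact (chain_bounds_and_window (by omega) hp' hspos hC hterm hq1 hq2 j hj1 hj2).1

/-- With the setup of the chain construction (`n ≥ 2`, `k ≥ n+1`, `k ≡ 1 (mod n)`,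
`m = kn`, nonnegative `p`, `s > 0`, `Π_{ℓ=1}^n p_ℓ ≥ m·s`, and `q` defined recursively
by `q_j = p_j` for `j ≤ n` and `q_j = q_{j−n} − s / Π_{ℓ=1}^{n−1} q_{j−ℓ}` for
`n < j ≤ k(n−1)+1`): `0 < q_j ≤ p_j` for every `1 ≤ j ≤ k(n−1)+1`. -/
theorem single_bounds
    (n k : ℕ) (hn : 2 ≤ n) (hk : n + 1 ≤ k) (hmod : k % n = 1)
    (p : ℕ → ℝ) (hp : ∀ j, 1 ≤ j → j ≤ k * (n - 1) + 1 → 0 ≤ p j)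
    (s : ℝ)
    (hs : s = ∑ j ∈ Finset.Icc 1 ((k - 1) * (n - 1)),
      |(p j - p (j + n)) * ∏ i ∈ Finset.Icc 1 (n - 1), p (j + i)|)
    (hspos : 0 < s)
    (hprod : ((k * n : ℕ) : ℝ) * s ≤ ∏ ℓ ∈ Finset.Icc 1 n, p ℓ)
    (q : ℕ → ℝ)
    (hq1 : ∀ j, 1 ≤ j → j ≤ n → q j = p j)
    (hq2 : ∀ j, n < j → j ≤ k * (n - 1) + 1 →
      q j = q (j - n) - s / ∏ ℓ ∈ Finset.Icc 1 (n - 1), q (j - ℓ))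
    (j : ℕ) (hj1 : 1 ≤ j) (hj2 : j ≤ k * (n - 1) + 1) :
    0 < q j ∧ q j ≤ p j :=
  single_bounds_general n k hn hk p hp s hs hspos hprod q hq1 hq2 j hj1 hj2
end

section
/- Let n ≥ 2 and k ≥ n + 1 be integers with k ≡ 1 (mod n), let m = kn, let p_1, …, p_{k(n−1)+1} be nonnegative reals, and set s = Σ_{j=1}^{(k−1)(n−1)} |(p_j − p_{j+n}) · Π_{i=1}^{n−1} p_{j+i}|. Assume s > 0 and Π_{ℓ=1}^{n} p_ℓ ≥ m·s. Define q_1, …, q_{k(n−1)+1} recursively by q_j = p_j for 1 ≤ j ≤ n and q_j = q_{j−n} − s / Π_{ℓ=1}^{n−1} q_{j−ℓ} for n < j ≤ k(n−1)+1. Then for every integer j ≥ 0 with j + n ≤ k(n−1) + 1, Π_{ℓ=1}^{n} q_{j+ℓ} ≥ (m − j)·s. -/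
/-!
Passing from the window `q_{j+1}, …, q_{j+n}` to `q_{j+2}, …, q_{j+n+1}` lowers its product by
exactly `s`: if `P` is the product of the `n - 1` shared terms, the recursion gives
`P · q_{j+n+1} = P · q_{j+1} - s`. Starting from `Π_{ℓ=1}^n p_ℓ ≥ m s`, the window products
stay `≥ (m - j) s > 0`, so `P` never vanishes and the induction goes through.
-/

open Finset

namespace Finset

variable {M : Type*} [CommMonoid M]

theorem prod_Icc_one_succ_eq_mul_prod (f : ℕ → M) (n : ℕ) :
    ∏ ℓ ∈ Icc 1 (n + 1), f ℓ = f 1 * ∏ ℓ ∈ Icc 1 n, f (ℓ + 1) := by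
  rw [← mul_prod_Ioc_eq_prod_Icc (by omega), ← Icc_add_one_left_eq_Ioc, ← map_add_right_Icc,
    prod_map]
  rfl

theorem prod_Icc_reflect (f : ℕ → M) (a b : ℕ) :
    ∏ ℓ ∈ Icc a b, f (a + b - ℓ) = ∏ ℓ ∈ Icc a b, f ℓ :=
  prod_nbij' (fun ℓ => a + b - ℓ) (fun ℓ => a + b - ℓ)
    (fun ℓ hℓ => by simp only [mem_Icc] at hℓ ⊢; omega)
    (fun ℓ hℓ => by simp only [mem_Icc] at hℓ ⊢; omega)
    (fun ℓ hℓ => by simp only [mem_Icc] at hℓ; omega)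
    (fun ℓ hℓ => by simp only [mem_Icc] at hℓ; omega)
    (fun _ _ => rfl)

end Finset

section Window

variable {K : Type*} [Field K] (q : ℕ → K) {n : ℕ}

theorem prod_window_eq_mul_prod_inner (hn : 0 < n) (j : ℕ) :
    ∏ ℓ ∈ Icc 1 n, q (j + ℓ) = q (j + 1) * ∏ ℓ ∈ Icc 1 (n - 1), q (j + 1 + ℓ) := by
  obtain ⟨n, rfl⟩ := Nat.exists_eq_add_of_lt hn
  simp only [zero_add, Nat.add_sub_cancel, prod_Icc_one_succ_eq_mul_prod, add_assoc, add_comm 1]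

theorem prod_window_succ_eq_prod_inner_mul (hn : 0 < n) (j : ℕ) :
    ∏ ℓ ∈ Icc 1 n, q (j + 1 + ℓ) = (∏ ℓ ∈ Icc 1 (n - 1), q (j + 1 + ℓ)) * q (j + 1 + n) := by
  obtain ⟨n, rfl⟩ := Nat.exists_eq_add_of_lt hn
  rw [zero_add, Nat.add_sub_cancel, prod_Icc_succ_top (by omega)]

theorem prod_reflect_eq_prod_inner (hn : 0 < n) (j : ℕ) :
    ∏ ℓ ∈ Icc 1 (n - 1), q (j + 1 + n - ℓ) = ∏ ℓ ∈ Icc 1 (n - 1), q (j + 1 + ℓ) := by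
  rw [← prod_Icc_reflect (fun ℓ => q (j + 1 + ℓ))]
  refine prod_congr rfl fun ℓ hℓ => ?_
  rw [mem_Icc] at hℓ
  congr 1
  omega

theorem prod_window_succ_eq_sub (hn : 0 < n) (s : K) (j : ℕ)
    (hW : ∏ ℓ ∈ Icc 1 n, q (j + ℓ) ≠ 0)
    (hrec : q (j + 1 + n) = q (j + 1) - s / ∏ ℓ ∈ Icc 1 (n - 1), q (j + 1 + n - ℓ)) :
    ∏ ℓ ∈ Icc 1 n, q (j + 1 + ℓ) = ∏ ℓ ∈ Icc 1 n, q (j + ℓ) - s := by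
  rw [prod_reflect_eq_prod_inner q hn] at hrec
  rw [prod_window_eq_mul_prod_inner q hn] at hW
  have hP : ∏ ℓ ∈ Icc 1 (n - 1), q (j + 1 + ℓ) ≠ 0 := right_ne_zero_of_mul hW
  rw [prod_window_succ_eq_prod_inner_mul q hn, prod_window_eq_mul_prod_inner q hn, hrec]
  field_simp

end Window

theorem n_tuple_bound_general
    (n k : ℕ) (hn : 2 ≤ n)
    (p : ℕ → ℝ)
    (s : ℝ)
    (hspos : 0 < s)
    (hprod : ((k * n : ℕ) : ℝ) * s ≤ ∏ ℓ ∈ Finset.Icc 1 n, p ℓ)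
    (q : ℕ → ℝ)
    (hq1 : ∀ j, 1 ≤ j → j ≤ n → q j = p j)
    (hq2 : ∀ j, n < j → j ≤ k * (n - 1) + 1 →
      q j = q (j - n) - s / ∏ ℓ ∈ Finset.Icc 1 (n - 1), q (j - ℓ))
    (j : ℕ) (hj : j + n ≤ k * (n - 1) + 1) :
    (((k * n : ℕ) : ℝ) - j) * s ≤ ∏ ℓ ∈ Finset.Icc 1 n, q (j + ℓ) := by
  induction j with
  | zero =>
    rw [Nat.cast_zero, sub_zero]
    refine hprod.trans_eq (prod_congr rfl fun ℓ hℓ => ?_)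
    rw [mem_Icc] at hℓ
    rw [zero_add, hq1 ℓ hℓ.1 hℓ.2]
  | succ j ih =>
    have hW := ih (by omega)
    have hjm : j + 1 ≤ k * n := by
      have := Nat.mul_sub_one k n
      omega
    have hjmR : (j : ℝ) + 1 ≤ ((k * n : ℕ) : ℝ) := by exact_mod_cast hjm
    have hWpos : 0 < ∏ ℓ ∈ Icc 1 n, q (j + ℓ) :=
      lt_of_lt_of_le (mul_pos (by linarith) hspos) hW
    have hrec := hq2 (j + 1 + n) (by omega) (by omega)
    rw [Nat.add_sub_cancel] at hrec
    rw [prod_window_succ_eq_sub q (by omega) s j hWpos.ne' hrec, Nat.cast_succ]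
    linarith

/-- With the setup of the chain construction (`n ≥ 2`, `k ≥ n+1`, `k ≡ 1 (mod n)`,
`m = kn`, nonnegative `p`, `s > 0`, `Π_{ℓ=1}^n p_ℓ ≥ m·s`, and `q` defined recursively
by `q_j = p_j` for `j ≤ n` and `q_j = q_{j−n} − s / Π_{ℓ=1}^{n−1} q_{j−ℓ}` for
`n < j ≤ k(n−1)+1`): for every `j ≥ 0` with `j + n ≤ k(n−1)+1`,
`Π_{ℓ=1}^n q_{j+ℓ} ≥ (m − j)·s`. -/
theorem n_tuple_bound
    (n k : ℕ) (hn : 2 ≤ n) (hk : n + 1 ≤ k) (hmod : k % n = 1)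
    (p : ℕ → ℝ) (hp : ∀ j, 1 ≤ j → j ≤ k * (n - 1) + 1 → 0 ≤ p j)
    (s : ℝ)
    (hs : s = ∑ j ∈ Finset.Icc 1 ((k - 1) * (n - 1)),
      |(p j - p (j + n)) * ∏ i ∈ Finset.Icc 1 (n - 1), p (j + i)|)
    (hspos : 0 < s)
    (hprod : ((k * n : ℕ) : ℝ) * s ≤ ∏ ℓ ∈ Finset.Icc 1 n, p ℓ)
    (q : ℕ → ℝ)
    (hq1 : ∀ j, 1 ≤ j → j ≤ n → q j = p j)
    (hq2 : ∀ j, n < j → j ≤ k * (n - 1) + 1 →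
      q j = q (j - n) - s / ∏ ℓ ∈ Finset.Icc 1 (n - 1), q (j - ℓ))
    (j : ℕ) (hj : j + n ≤ k * (n - 1) + 1) :
    (((k * n : ℕ) : ℝ) - j) * s ≤ ∏ ℓ ∈ Finset.Icc 1 n, q (j + ℓ) :=
  n_tuple_bound_general n k hn p s hspos hprod q hq1 hq2 j hj
end

section
/- Let n be a positive integer, let T be a finite set (of transcripts), and for each i ∈ [n] let A_i be a set (of possible inputs of player i) and let ρ_i : A_i × T → ℝ≥0. For a tuple x ∈ Π_{i∈[n]} A_i define P_x : T → ℝ≥0 by P_x(π) = Π_{i∈[n]} ρ_i(x_i, π). Let X, Y, Z ∈ Π_{i∈[n]} A_i and let I, J ⊆ [n] be disjoint sets such that X_i = Y_i for all i ∉ I and X_i = Z_i for all i ∉ J. Define W by W_i = Y_i for i ∈ I, W_i = Z_i for i ∈ J, and W_i = X_i otherwise. Suppose each of P_X, P_Y, P_Z, P_W sums to 1 over T. Then (1/2)·Σ_{π∈T} |P_X(π) − P_W(π)| ≤ (1/2)·Σ_{π∈T} |P_X(π) − P_Y(π)| + (1/2)·Σ_{π∈T} |P_X(π) − P_Z(π)|.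 -/
/-!
Coordinatewise, `W` together with `X` uses exactly the coordinates of `Y` and `Z`, so the
product form gives `P_X(π) P_W(π) = P_Y(π) P_Z(π)` for every transcript `π`. For nonnegative
`b, c, d` with `a d = b c` one has `(a - d)⁺ ≤ (a - b)⁺ + (a - c)⁺`, and between functions
of equal total mass the `ℓ¹` distance is twice the sum of the positive parts of the difference;
summing the pointwise inequality over `T` gives the bound.
-/

open Finset

theorem posPart_sub_le_of_mul_eq_mul {R : Type*} [CommRing R] [LinearOrder R]
    [IsStrictOrderedRing R] {a b c d : R} (hb : 0 ≤ b) (hc : 0 ≤ c) (hd : 0 ≤ d)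
    (h : a * d = b * c) : (a - d)⁺ ≤ (a - b)⁺ + (a - c)⁺ := by
  rw [posPart_def]
  refine max_le ?_ (by positivity)
  rcases le_or_gt a d with had | had
  · exact (sub_nonpos.mpr had).trans (by positivity)
  have ha : 0 < a := hd.trans_lt had
  rcases lt_or_ge a b with hab | hba
  · have hcd : c ≤ d := by nlinarith
    linarith [le_posPart (a - c), posPart_nonneg (a - b)]
  rcases lt_or_ge a c with hac | hca
  · have hbd : b ≤ d := by nlinarith
    linarith [le_posPart (a - b), posPart_nonneg (a - c)]
  -- `(a - b) (a - c) = a (a - b - c + d)` because `a d = b c`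
  have hsum : a - d ≤ (a - b) + (a - c) := by
    nlinarith [mul_nonneg (sub_nonneg.mpr hba) (sub_nonneg.mpr hca)]
  linarith [le_posPart (a - b), le_posPart (a - c)]

theorem sum_abs_sub_eq_two_nsmul_sum_posPart {ι α : Type*} [AddCommGroup α] [LinearOrder α]
    [IsOrderedAddMonoid α] (s : Finset ι) (f g : ι → α)
    (h : ∑ i ∈ s, f i = ∑ i ∈ s, g i) :
    ∑ i ∈ s, |f i - g i| = 2 • ∑ i ∈ s, (f i - g i)⁺ := by
  have hdiff : ∑ i ∈ s, (f i - g i) = 0 := by rw [sum_sub_distrib, h, sub_self]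
  calc ∑ i ∈ s, |f i - g i| = ∑ i ∈ s, (|f i - g i| + (f i - g i)) := by
        rw [sum_add_distrib, hdiff, add_zero]
    _ = 2 • ∑ i ∈ s, (f i - g i)⁺ := by
        rw [smul_sum]
        exact sum_congr rfl fun i _ => abs_add_eq_two_nsmul_posPart _

theorem sum_abs_sub_le_of_mul_eq_mul {ι R : Type*} [CommRing R] [LinearOrder R]
    [IsStrictOrderedRing R] (s : Finset ι) (a b c d : ι → R)
    (hb : ∀ i ∈ s, 0 ≤ b i) (hc : ∀ i ∈ s, 0 ≤ c i) (hd : ∀ i ∈ s, 0 ≤ d i)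
    (h : ∀ i ∈ s, a i * d i = b i * c i) (hab : ∑ i ∈ s, a i = ∑ i ∈ s, b i)
    (hac : ∑ i ∈ s, a i = ∑ i ∈ s, c i) (had : ∑ i ∈ s, a i = ∑ i ∈ s, d i) :
    ∑ i ∈ s, |a i - d i| ≤ ∑ i ∈ s, |a i - b i| + ∑ i ∈ s, |a i - c i| := by
  rw [sum_abs_sub_eq_two_nsmul_sum_posPart s a d had,
    sum_abs_sub_eq_two_nsmul_sum_posPart s a b hab, sum_abs_sub_eq_two_nsmul_sum_posPart s a c hac,
    ← smul_add, ← sum_add_distrib]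
  gcongr with i hi
  exact posPart_sub_le_of_mul_eq_mul (hb i hi) (hc i hi) (hd i hi) (h i hi)

theorem prod_mul_prod_eq_of_rectangle {ι M : Type*} [Fintype ι] [DecidableEq ι] [CommMonoid M]
    {A : ι → Type*} (f : (i : ι) → A i → M) {X Y Z W : (i : ι) → A i} {I J : Finset ι}
    (hIJ : Disjoint I J) (hXY : ∀ i ∉ I, X i = Y i) (hXZ : ∀ i ∉ J, X i = Z i)
    (hW : ∀ i, W i = if i ∈ I then Y i else if i ∈ J then Z i else X i) :
    (∏ i, f i (X i)) * ∏ i, f i (W i) = (∏ i, f i (Y i)) * ∏ i, f i (Z i) := by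
  simp only [← prod_mul_distrib]
  refine prod_congr rfl fun i _ => ?_
  rw [hW i]
  by_cases hI : i ∈ I
  · rw [if_pos hI, ← hXZ i (disjoint_left.mp hIJ hI), mul_comm]
  by_cases hJ : i ∈ J
  · rw [if_neg hI, if_pos hJ, ← hXY i hI]
  · rw [if_neg hI, if_neg hJ, ← hXY i hI, ← hXZ i hJ]

theorem rectangling_general
    (n : ℕ) {T : Type*} [Fintype T]
    (A : Fin n → Type*) (ρ : (i : Fin n) → A i → T → ℝ)
    (hρ : ∀ i a π, 0 ≤ ρ i a π)
    (X Y Z W : (i : Fin n) → A i)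
    (I J : Finset (Fin n)) (hIJ : Disjoint I J)
    (hXY : ∀ i ∉ I, X i = Y i) (hXZ : ∀ i ∉ J, X i = Z i)
    (hW : ∀ i, W i = if i ∈ I then Y i else if i ∈ J then Z i else X i)
    (hXsum : ∑ π : T, ∏ i, ρ i (X i) π = 1)
    (hYsum : ∑ π : T, ∏ i, ρ i (Y i) π = 1)
    (hZsum : ∑ π : T, ∏ i, ρ i (Z i) π = 1)
    (hWsum : ∑ π : T, ∏ i, ρ i (W i) π = 1) :
    (1 / 2) * ∑ π : T, |∏ i, ρ i (X i) π - ∏ i, ρ i (W i) π| ≤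
      (1 / 2) * ∑ π : T, |∏ i, ρ i (X i) π - ∏ i, ρ i (Y i) π| +
      (1 / 2) * ∑ π : T, |∏ i, ρ i (X i) π - ∏ i, ρ i (Z i) π| := by
  have hP : ∀ (x : (i : Fin n) → A i) π, 0 ≤ ∏ i, ρ i (x i) π :=
    fun x π => prod_nonneg fun i _ => hρ i (x i) π
  rw [← mul_add]
  gcongr
  exact sum_abs_sub_le_of_mul_eq_mul univ _ _ _ _
    (fun π _ => hP Y π) (fun π _ => hP Z π) (fun π _ => hP W π)
    (fun π _ => prod_mul_prod_eq_of_rectangle (fun i a => ρ i a π) hIJ hXY hXZ hW)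
    (hXsum.trans hYsum.symm) (hXsum.trans hZsum.symm) (hXsum.trans hWsum.symm)

/-- The randomized rectangle property: if the transcript distribution on input `x`
factors as `P_x(π) = Π_i ρ_i(x_i, π)`, `X, Y, Z` are inputs with `X = Y` outside `I`
and `X = Z` outside `J` (for disjoint `I, J`), and `W` takes `Y`'s coordinates on `I`,
`Z`'s on `J`, and `X`'s elsewhere, and all four induced functions are probability mass
functions on `T`, then `TV(P_X, P_W) ≤ TV(P_X, P_Y) + TV(P_X, P_Z)`. -/
theorem rectangling
    (n : ℕ) (hn : 0 < n) {T : Type*} [Fintype T]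
    (A : Fin n → Type*) (ρ : (i : Fin n) → A i → T → ℝ)
    (hρ : ∀ i a π, 0 ≤ ρ i a π)
    (X Y Z W : (i : Fin n) → A i)
    (I J : Finset (Fin n)) (hIJ : Disjoint I J)
    (hXY : ∀ i ∉ I, X i = Y i) (hXZ : ∀ i ∉ J, X i = Z i)
    (hW : ∀ i, W i = if i ∈ I then Y i else if i ∈ J then Z i else X i)
    (hXsum : ∑ π : T, ∏ i, ρ i (X i) π = 1)
    (hYsum : ∑ π : T, ∏ i, ρ i (Y i) π = 1)
    (hZsum : ∑ π : T, ∏ i, ρ i (Z i) π = 1)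
    (hWsum : ∑ π : T, ∏ i, ρ i (W i) π = 1) :
    (1 / 2) * ∑ π : T, |∏ i, ρ i (X i) π - ∏ i, ρ i (W i) π| ≤
      (1 / 2) * ∑ π : T, |∏ i, ρ i (X i) π - ∏ i, ρ i (Y i) π| +
      (1 / 2) * ∑ π : T, |∏ i, ρ i (X i) π - ∏ i, ρ i (Z i) π| :=
  rectangling_general n A ρ hρ X Y Z W I J hIJ hXY hXZ hW hXsum hYsum hZsum hWsum
end

section
/- There exist universal constants κ > 0 and m₀ such that the following holds for all integers m ≥ m₀ and n with 2 ≤ n ≤ m^{1/3} and n | m, where k = m/n. For every integer z with 2^{√m} ≤ z ≤ 2^{2√m}: if X_1, …, X_z are independent random subsets of [m], each uniformly distributed among the subsets of [m] of size k, then the probability that there exists a set S ⊆ [m] with |S| = ⌈n·log₂ m⌉ such that S ⊄ [m]∖X_ℓ for every ℓ ∈ [z] is at most 2^{−κ√m}. -/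
/-
Union bound over the candidate sets `S` of size `s = ⌈n log₂ m⌉`. A fixed `S` avoids a uniform
`k`-set with probability `p = C(m-s,k) / C(m,k) ≥ ((m-s-k)/m)^s ≥ 4^(-s)`, so it meets all `z` of
them with probability `(1-p)^z ≤ exp(-z p) ≤ exp(-2^(√m/2))`, because `s ≤ √m/8`. The
`C(m,s) ≤ m^s ≤ 2^(√m/8)` choices of `S` cannot compensate for this, which gives `κ = 1`.
-/

open Finset Real Filter

theorem Nat.choose_mul_sub_pow_le {m k s : ℕ} (h : s + k ≤ m) :
    m.choose k * (m - s - k) ^ s ≤ (m - s).choose k * m ^ s := by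
  induction s with
  | zero => simp
  | succ s ih =>
    have hstep := Nat.choose_mul_succ_eq (m - s - 1) k
    rw [show m - s - 1 + 1 = m - s by omega] at hstep
    calc m.choose k * (m - (s + 1) - k) ^ (s + 1)
        ≤ m.choose k * (m - s - k) ^ s * (m - s - k) := by
          rw [pow_succ, ← mul_assoc]; gcongr <;> omega
      _ ≤ (m - s).choose k * m ^ s * (m - s - k) :=
          Nat.mul_le_mul_right _ (ih (by omega))
      _ = (m - (s + 1)).choose k * (m - s) * m ^ s := by
          rw [show m - (s + 1) = m - s - 1 by omega, hstep]; ring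
      _ ≤ (m - (s + 1)).choose k * m ^ (s + 1) := by
          rw [pow_succ', ← mul_assoc]; gcongr; omega

theorem pow_sub_div_le_choose_div {m k s : ℕ} (h : s + k ≤ m) :
    (((m - s - k : ℕ) : ℝ) / m) ^ s ≤ ((m - s).choose k : ℝ) / m.choose k := by
  rcases Nat.eq_zero_or_pos m with rfl | hm
  · obtain ⟨rfl, rfl⟩ : s = 0 ∧ k = 0 := by omega
    simp
  rw [div_pow, div_le_div_iff₀ (by positivity) (by exact_mod_cast Nat.choose_pos (by omega))]
  exact_mod_cast (mul_comm _ _).trans_le (Nat.choose_mul_sub_pow_le h)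

section Coverage

variable {α : Type*} [Fintype α] [DecidableEq α]

theorem card_filter_subset_compl (S : Finset α) (k : ℕ) :
    #{X : {t : Finset α // #t = k} | S ⊆ X.1ᶜ} = (Fintype.card α - #S).choose k := by
  have : ({X : {t : Finset α // #t = k} | S ⊆ X.1ᶜ} : Finset _).map (Function.Embedding.subtype _)
      = Sᶜ.powersetCard k := by
    ext t
    simp [mem_powersetCard, subset_compl_comm (s := t), and_comm]
  rw [← card_map, this, card_powersetCard, card_compl]

theorem card_filter_forall_apply {ι β : Type*} [Fintype ι] [DecidableEq ι] [Fintype β]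
    (P : β → Prop) [DecidablePred P] :
    #{f : ι → β | ∀ i, P (f i)} = #{b | P b} ^ Fintype.card ι := by
  have : ({f : ι → β | ∀ i, P (f i)} : Finset _) = Fintype.piFinset fun _ => {b | P b} := by
    ext f
    simp [Fintype.mem_piFinset]
  rw [this, Fintype.card_piFinset, prod_const, card_univ]

theorem card_filter_exists_hitting_le {ι : Type*} [Fintype ι] [DecidableEq ι] (k s : ℕ) :
    #{Xs : ι → {t : Finset α // #t = k} | ∃ S : Finset α, #S = s ∧ ∀ i, ¬ S ⊆ (Xs i).1ᶜ}
      ≤ (Fintype.card α).choose s *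
          ((Fintype.card α).choose k - (Fintype.card α - s).choose k) ^ Fintype.card ι := by
  calc _ ≤ ∑ S ∈ powersetCard s univ,
          #{Xs : ι → {t : Finset α // #t = k} | ∀ i, ¬ S ⊆ (Xs i).1ᶜ} := by
        refine (card_le_card fun Xs hXs => ?_).trans card_biUnion_le
        obtain ⟨S, hS, hhit⟩ := (mem_filter.1 hXs).2
        exact mem_biUnion.2 ⟨S, mem_powersetCard_univ.2 hS, by simpa using hhit⟩
    _ = _ := by
        rw [sum_congr rfl fun S hS => ?_, sum_const, card_powersetCard, card_univ,
          smul_eq_mul]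
        rw [card_filter_forall_apply (fun X : {t : Finset α // #t = k} => ¬ S ⊆ X.1ᶜ),
          filter_not, card_sdiff_of_subset (filter_subset _ _), card_filter_subset_compl,
          mem_powersetCard_univ.1 hS, card_univ, Fintype.card_finset_len]

theorem card_filter_exists_hitting_div_le {ι : Type*} [Fintype ι] [DecidableEq ι] {k s : ℕ}
    (h : s + k ≤ Fintype.card α) :
    (#{Xs : ι → {t : Finset α // #t = k} | ∃ S : Finset α, #S = s ∧ ∀ i, ¬ S ⊆ (Xs i).1ᶜ} : ℝ)
        / Fintype.card (ι → {t : Finset α // #t = k})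
      ≤ (Fintype.card α : ℝ) ^ s * exp (-(Fintype.card ι *
          (((Fintype.card α - s - k : ℕ) : ℝ) / Fintype.card α) ^ s)) := by
  set m := Fintype.card α
  set z := Fintype.card ι
  have hN : (0 : ℝ) < m.choose k := by exact_mod_cast Nat.choose_pos (by omega)
  have hMN : (m - s).choose k ≤ m.choose k := Nat.choose_le_choose k (Nat.sub_le m s)
  have hp : ((m - s).choose k : ℝ) / m.choose k ≤ 1 :=
    div_le_one_of_le₀ (by exact_mod_cast hMN) hN.le
  rw [Fintype.card_fun, Fintype.card_finset_len, Nat.cast_pow]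
  calc _ ≤ ((m.choose s * (m.choose k - (m - s).choose k) ^ z : ℕ) : ℝ) / (m.choose k : ℕ) ^ z := by
        gcongr; exact_mod_cast card_filter_exists_hitting_le k s
    _ = m.choose s * (1 - ((m - s).choose k : ℝ) / m.choose k) ^ z := by
        push_cast [Nat.cast_sub hMN]
        rw [mul_div_assoc, ← div_pow, sub_div, div_self hN.ne']
    _ ≤ (m : ℝ) ^ s * exp (-(z * (((m - s).choose k : ℝ) / m.choose k))) := by
        gcongr
        · exact_mod_cast Nat.choose_le_pow m s
        · rw [← mul_neg, exp_nat_mul]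
          exact pow_le_pow_left₀ (sub_nonneg.2 hp) (one_sub_le_exp_neg _) z
    _ ≤ _ := by
        gcongr; exact pow_sub_div_le_choose_div h

end Coverage

theorem two_rpow_mul_exp_neg_two_rpow_le {t : ℝ} (ht : 0 ≤ t) :
    (2 : ℝ) ^ (t / 8) * exp (-(2 : ℝ) ^ (t / 2)) ≤ 2 ^ (-t) := by
  have hu : 0 ≤ log 2 * t := mul_nonneg (log_nonneg one_le_two) ht
  have hexp := quadratic_le_exp_of_nonneg (x := log 2 * (t / 2)) (by positivity)
  simp only [rpow_def_of_pos two_pos, ← exp_add, exp_le_exp]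
  nlinarith [sq_nonneg (log 2 * t - 5 / 2)]

theorem eventually_logb_sq_le_rpow :
    ∀ᶠ x : ℝ in atTop, logb 2 x ^ 2 ≤ x ^ ((1 : ℝ) / 6) / 16 := by
  have hlog2 : 0 < log 2 := log_pos one_lt_two
  filter_upwards [(isLittleO_log_rpow_rpow_atTop 2 (by norm_num : (0 : ℝ) < 1 / 6)).bound
    (c := log 2 ^ 2 / 16) (by positivity), eventually_ge_atTop 0] with x hx hx0
  rw [norm_of_nonneg (rpow_nonneg hx0 _), rpow_two, norm_pow, norm_eq_abs, sq_abs] at hx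
  rw [logb, div_pow, div_le_iff₀ (by positivity)]
  linarith

theorem eventually_ceil_mul_logb_mul_logb_le :
    ∀ᶠ m : ℕ in atTop, ∀ n : ℕ, (n : ℝ) ≤ (m : ℝ) ^ ((1 : ℝ) / 3) →
      (⌈(n : ℝ) * logb 2 m⌉₊ : ℝ) * logb 2 m ≤ √m / 8 := by
  have hreal : ∀ᶠ x : ℝ in atTop, 0 ≤ logb 2 x ∧
      (x ^ ((1 : ℝ) / 3) * logb 2 x + 1) * logb 2 x ≤ √x / 8 := by
    filter_upwards [eventually_logb_sq_le_rpow, eventually_ge_atTop 2] with x hx hx2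
    have hL : 1 ≤ logb 2 x := by
      rw [le_logb_iff_rpow_le one_lt_two (by linarith)]; simpa
    have hsqrt : x ^ ((1 : ℝ) / 3) * x ^ ((1 : ℝ) / 6) = √x := by
      rw [← rpow_add (by linarith), sqrt_eq_rpow]; norm_num
    have hmono : x ^ ((1 : ℝ) / 6) ≤ √x := by
      rw [sqrt_eq_rpow]; exact rpow_le_rpow_of_exponent_le (by linarith) (by norm_num)
    have hcube : 0 ≤ x ^ ((1 : ℝ) / 3) := rpow_nonneg (by linarith) _
    refine ⟨by linarith, ?_⟩
    calc (x ^ ((1 : ℝ) / 3) * logb 2 x + 1) * logb 2 x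
        ≤ x ^ ((1 : ℝ) / 3) * logb 2 x ^ 2 + logb 2 x ^ 2 := by nlinarith
      _ ≤ x ^ ((1 : ℝ) / 3) * (x ^ ((1 : ℝ) / 6) / 16) + √x / 16 := by gcongr; linarith
      _ = √x / 8 := by rw [mul_div_assoc', hsqrt]; ring
  filter_upwards [tendsto_natCast_atTop_atTop.eventually hreal] with m ⟨hL, hm⟩ n hn
  calc (⌈(n : ℝ) * logb 2 m⌉₊ : ℝ) * logb 2 m
      ≤ ((m : ℝ) ^ ((1 : ℝ) / 3) * logb 2 m + 1) * logb 2 m := by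
        gcongr
        exact (Nat.ceil_lt_add_one (by positivity)).le.trans (by gcongr)
    _ ≤ √m / 8 := hm

theorem two_rpow_half_le_mul_quarter_pow {t z : ℝ} {s : ℕ} (hz : 2 ^ t ≤ z) (hs : 4 * s ≤ t) :
    (2 : ℝ) ^ (t / 2) ≤ z * (1 / 4) ^ s := by
  have hquarter : ((1 : ℝ) / 4) ^ s = 2 ^ (-(2 * s : ℝ)) := by
    rw [show -(2 * s : ℝ) = -2 * s by ring, rpow_mul_natCast zero_le_two]
    norm_num
  calc (2 : ℝ) ^ (t / 2) ≤ 2 ^ (t + -(2 * s : ℝ)) := by gcongr <;> linarith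
    _ = 2 ^ t * (1 / 4) ^ s := by rw [rpow_add two_pos, hquarter]
    _ ≤ z * (1 / 4) ^ s := by gcongr

theorem quarter_le_sub_div {m s k : ℕ} (hs : 8 * s ≤ m) (hk : 2 * k ≤ m) (hm : 0 < m) :
    (1 / 4 : ℝ) ≤ ((m - s - k : ℕ) : ℝ) / m := by
  rw [le_div_iff₀ (by exact_mod_cast hm), one_div_mul_eq_div, div_le_iff₀' four_pos]
  exact_mod_cast (by omega : m ≤ 4 * (m - s - k))

/-- Small-set coverage of random complements: there are universal constants `κ > 0` and
`m₀` such that for all `m ≥ m₀`, `2 ≤ n ≤ m^{1/3}` with `n ∣ m`, `k = m/n`, and every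
`z` with `2^{√m} ≤ z ≤ 2^{2√m}`: if `X_1, …, X_z` are i.i.d. uniformly random
`k`-subsets of `[m]`, the probability that some set `S` of size `⌈n·log₂ m⌉` is
contained in none of the complements `[m]∖X_ℓ` is at most `2^{−κ√m}`. -/
theorem small_coverage_whp :
    ∃ κ : ℝ, 0 < κ ∧ ∃ m₀ : ℕ, ∀ m : ℕ, m₀ ≤ m → ∀ n : ℕ, 2 ≤ n →
      (n : ℝ) ≤ (m : ℝ) ^ ((1 : ℝ) / 3) → n ∣ m →
      ∀ z : ℕ, 2 ^ (Real.sqrt m) ≤ (z : ℝ) → (z : ℝ) ≤ 2 ^ (2 * Real.sqrt m) →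
      ((Finset.univ.filter
          (fun Xf : Fin z → {s : Finset (Fin m) // s.card = m / n} =>
            ∃ S : Finset (Fin m), S.card = ⌈(n : ℝ) * Real.logb 2 m⌉₊ ∧
              ∀ ℓ : Fin z, ¬ S ⊆ ((Xf ℓ).1)ᶜ)).card : ℝ) /
        (Fintype.card (Fin z → {s : Finset (Fin m) // s.card = m / n}) : ℝ) ≤
      2 ^ (-(κ * Real.sqrt m)) := by
  obtain ⟨m₀, hm₀⟩ := eventually_atTop.1
    (eventually_ceil_mul_logb_mul_logb_le.and (eventually_ge_atTop 2))
  refine ⟨1, one_pos, m₀, fun m hm n hn hn3 _ z hz _ => ?_⟩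
  obtain ⟨hslog, hm2⟩ := hm₀ m hm
  replace hslog := hslog n hn3
  set s := ⌈(n : ℝ) * logb 2 m⌉₊
  have hm2R : (2 : ℝ) ≤ m := by exact_mod_cast hm2
  have hL : 1 ≤ logb 2 m := by rw [le_logb_iff_rpow_le one_lt_two (by linarith)]; simpa
  have hs : (s : ℝ) ≤ √m / 8 := by nlinarith
  have hsm : 8 * s ≤ m := by
    have := sqrt_le_self_iff.2 (Or.inr (by linarith : (1 : ℝ) ≤ m))
    exact_mod_cast (by linarith : 8 * (s : ℝ) ≤ m)
  have hk : 2 * (m / n) ≤ m := by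
    have := Nat.div_mul_le_self m n
    nlinarith
  have hpow : (m : ℝ) ^ s ≤ 2 ^ (√m / 8) :=
    calc (m : ℝ) ^ s = 2 ^ (logb 2 m * s) := by
          rw [rpow_mul_natCast zero_le_two, rpow_logb two_pos one_lt_two.ne' (by linarith)]
      _ ≤ 2 ^ (√m / 8) := rpow_le_rpow_of_exponent_le one_le_two (by linarith)
  calc _ ≤ (m : ℝ) ^ s * exp (-(z * (((m - s - m / n : ℕ) : ℝ) / m) ^ s)) := by
        have h := card_filter_exists_hitting_div_le (α := Fin m) (ι := Fin z) (k := m / n)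
          (s := s) (by rw [Fintype.card_fin]; omega)
        simp only [Fintype.card_fin] at h
        -- `convert` reconciles the two `Decidable` instances of the filtering predicate
        convert h
    _ ≤ 2 ^ (√m / 8) * exp (-2 ^ (√m / 2)) := by
        gcongr
        exact (two_rpow_half_le_mul_quarter_pow hz (by linarith)).trans
          (by gcongr _ * ?_ ^ _; exact quarter_le_sub_div hsm hk (by omega))
    _ ≤ 2 ^ (-√m) := two_rpow_mul_exp_neg_two_rpow_le (sqrt_nonneg _)
    _ = 2 ^ (-(1 * √m)) := by rw [one_mul]
end

section
/- Let n ≥ 2, c ≥ 1, z ≥ 1 be integers, set ε = n^{-1/3} and assume ε³n = 1 (which holds by definition of ε). Let R be a finite set and M = R × [c]. Suppose S_1, …, S_z ⊆ [c], each of size at most εc, satisfy: for every S ⊆ [c] and every L ⊆ [z] with |L| = n, Σ_{ℓ∈L} |S ∩ S_ℓ| ≤ (|S|/c + 3ε)·εnc. Let X_1, …, X_n ⊆ [z] be pairwise disjoint and nonempty. Let λ ≥ 1 and let f_1, …, f_n : 2^R → ℝ≥0 be monotone functions with f_i(∅) = 0 such that for every T ⊆ [n] and every tuple (B_i)_{i∈T}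 of pairwise disjoint subsets of R, Σ_{i∈T} f_i(B_i) ≤ (|T| + 1)/λ. For A ⊆ M define v_i(A) = λ · max_{ℓ∈X_i} Σ_{j∈S_ℓ} f_i(A ∩ (R × {j})) for i ∈ [n], and u_j(A) = εn · 1[A ⊇ R × {j}] for j ∈ [c]. Then for every tuple (A_1, …, A_n, A'_1, …, A'_c) of pairwise disjoint subsets of M, Σ_{i∈[n]} v_i(A_i) + Σ_{j∈[c]} u_j(A'_j) ≤ (1 + 3ε + ε²)·εnc. -/
/-! For each bidder `i` fix `ℓ i ∈ X i` attaining the maximum in `v_i`; the `ℓ i` are distinct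
because the `X i` are disjoint. In column `j` the bidders `i` with `j ∈ S (ℓ i)` hold disjoint
subsets of `R`, so the gap property bounds `λ` times their value there by their number plus one,
and their value is `0` when a single-minded bidder holds the whole column. Summing over the `d`
columns not held by single-minded bidders, the scattering property for `L = {ℓ i}` bounds the
total number by `εnd + 3ε²nc`; the single-minded bidders get `εn(c - d)`, and the remaining
`d ≤ c = ε³nc`. -/

open Finset Function

section Columns

variable {R ι : Type*} [DecidableEq R] [DecidableEq ι]

def column (A : Finset (R × ι)) (j : ι) : Finset R :=
  (A.filter fun x => x.2 = j).image Prod.fst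

@[simp]
theorem mem_column {A : Finset (R × ι)} {j : ι} {r : R} : r ∈ column A j ↔ (r, j) ∈ A := by
  simp [column]

theorem disjoint_column {A B : Finset (R × ι)} (h : Disjoint A B) (j : ι) :
    Disjoint (column A j) (column B j) :=
  disjoint_left.2 fun _ hA hB => disjoint_left.1 h (mem_column.1 hA) (mem_column.1 hB)

theorem column_eq_empty_of_subset [Fintype R] {A B : Finset (R × ι)} {j : ι} (h : Disjoint A B)
    (hB : univ.image (fun r : R => (r, j)) ⊆ B) : column A j = ∅ :=
  eq_empty_of_forall_notMem fun r hr =>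
    disjoint_left.1 h (mem_column.1 hr) (hB (mem_image_of_mem _ (mem_univ r)))

end Columns

theorem sum_card_filter_mem_eq_sum_image {ι κ α : Type*} [Fintype ι] [DecidableEq κ]
    [DecidableEq α] (D : Finset κ) (S : α → Finset κ) {ℓ : ι → α} (hℓ : Injective ℓ) :
    ∑ j ∈ D, #{i | j ∈ S (ℓ i)} = ∑ a ∈ univ.image ℓ, #(D ∩ S a) := by
  rw [sum_image fun _ _ _ _ h => hℓ h]
  simpa [bipartiteAbove, bipartiteBelow, filter_mem_eq_inter] using
    (sum_card_bipartiteAbove_eq_sum_card_bipartiteBelow (fun j i => j ∈ S (ℓ i))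
      (s := D) (t := univ))

theorem mul_sum_sum_le_of_gap {ι κ R : Type*} [Fintype ι] [Fintype κ] [DecidableEq κ]
    (f : ι → Finset R → ℝ) (hf0 : ∀ i, f i ∅ = 0) {lam : ℝ} (hlam : 0 < lam)
    (hgap : ∀ (T : Finset ι) (B : ι → Finset R),
      (∀ i ∈ T, ∀ j ∈ T, i ≠ j → Disjoint (B i) (B j)) → ∑ i ∈ T, f i (B i) ≤ (#T + 1) / lam)
    (K : ι → Finset κ) (P : ι → κ → Finset R)
    (hP : ∀ j i i', i ≠ i' → Disjoint (P i j) (P i' j))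
    (D : Finset κ) (hD : ∀ j ∉ D, ∀ i, P i j = ∅) :
    lam * ∑ i, ∑ j ∈ K i, f i (P i j) ≤ ∑ j ∈ D, ((#{i | j ∈ K i} : ℝ) + 1) := by
  have hswap : ∑ i, ∑ j ∈ K i, f i (P i j) = ∑ j, ∑ i ∈ {i | j ∈ K i}, f i (P i j) :=
    sum_comm' fun i j => by simp
  have houtside : ∀ j ∉ D, ∑ i ∈ {i | j ∈ K i}, f i (P i j) = 0 := fun j hj =>
    sum_eq_zero fun i _ => by rw [hD j hj i, hf0]
  rw [hswap, ← sum_subset (subset_univ D) fun j _ hj => houtside j hj, mul_sum]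
  refine sum_le_sum fun j _ => ?_
  rw [← le_div_iff₀' hlam]
  exact hgap _ (fun i => P i j) fun i _ i' _ h => hP j i i' h

theorem zero_instance_welfare_bound_general
    (n c z : ℕ) (hc : 1 ≤ c)
    (ε : ℝ) (hε3 : ε ^ 3 * n = 1)
    {R : Type*} [Fintype R] [DecidableEq R]
    (S : Fin z → Finset (Fin c))
    (hS : ∀ (T : Finset (Fin c)) (L : Finset (Fin z)), L.card = n →
      (∑ ℓ ∈ L, ((T ∩ S ℓ).card : ℝ)) ≤ ((T.card : ℝ) / c + 3 * ε) * (ε * n * c))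
    (X : Fin n → Finset (Fin z))
    (hXdisj : ∀ i j, i ≠ j → Disjoint (X i) (X j))
    (hXne : ∀ i, (X i).Nonempty)
    (lam : ℝ) (hlam : 1 ≤ lam)
    (f : Fin n → Finset R → ℝ)
    (hf0 : ∀ i, f i ∅ = 0)
    (hgap : ∀ (T : Finset (Fin n)) (B : Fin n → Finset R),
      (∀ i ∈ T, ∀ j ∈ T, i ≠ j → Disjoint (B i) (B j)) →
      ∑ i ∈ T, f i (B i) ≤ ((T.card : ℝ) + 1) / lam)
    (A : Fin n → Finset (R × Fin c)) (A' : Fin c → Finset (R × Fin c))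
    (hAA : ∀ i j, i ≠ j → Disjoint (A i) (A j))
    (hAA' : ∀ i j, Disjoint (A i) (A' j)) :
    (∑ i : Fin n, lam * (X i).sup' (hXne i) (fun ℓ =>
        ∑ j ∈ S ℓ, f i (((A i).filter (fun x => x.2 = j)).image Prod.fst))) +
      (∑ j : Fin c, ε * n *
        (if (Finset.univ.image (fun r : R => (r, j))) ⊆ A' j then (1 : ℝ) else 0)) ≤
    (1 + 3 * ε + ε ^ 2) * (ε * n * c) := by
  choose ℓ hℓX hℓmax using fun i =>
    (X i).exists_mem_eq_sup' (hXne i) fun l => ∑ j ∈ S l, f i (column (A i) j)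
  have hℓ : Injective ℓ := fun i i' h => by_contra fun hne =>
    disjoint_left.1 (hXdisj i i' hne) (hℓX i) (h ▸ hℓX i')
  set full : Fin c → Prop := fun j => univ.image (fun r : R => (r, j)) ⊆ A' j
  set D : Finset (Fin c) := {j | ¬ full j}
  have hv := mul_sum_sum_le_of_gap f hf0 (zero_lt_one.trans_le hlam) hgap (fun i => S (ℓ i))
    (fun i j => column (A i) j) (fun j i i' h => disjoint_column (hAA i i' h) j) D
    fun j hj i => column_eq_empty_of_subset (hAA' i j) (by simpa [D] using hj)
  have hscatter : ∑ j ∈ D, (#{i | j ∈ S (ℓ i)} : ℝ) ≤ ε * n * #D + 3 * ε ^ 2 * n * c := by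
    have hcount := congrArg (Nat.cast : ℕ → ℝ) (sum_card_filter_mem_eq_sum_image D S hℓ)
    push_cast at hcount
    have hc0 : (c : ℝ) ≠ 0 := Nat.cast_ne_zero.2 (by omega)
    rw [hcount]
    convert hS D (univ.image ℓ) (by simp [card_image_of_injective _ hℓ]) using 1
    field_simp
  have hcard : #{j | full j} + #D = c := by
    simpa using card_filter_add_card_filter_not (s := (univ : Finset (Fin c))) full
  have hDc : (#D : ℝ) ≤ c := by exact_mod_cast hcard ▸ Nat.le_add_left _ _
  calc _ = lam * ∑ i, ∑ j ∈ S (ℓ i), f i (column (A i) j) + ε * n * #{j | full j} := by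
        rw [← mul_sum, ← mul_sum, sum_boole]
        exact congrArg (fun s => lam * s + _) (sum_congr rfl fun i _ => hℓmax i)
    _ ≤ ε * n * (#{j | full j} + #D) + 3 * ε ^ 2 * n * c + ε ^ 3 * n * c := by
        rw [sum_add_distrib, sum_const, nsmul_one] at hv
        linarith [show ε ^ 3 * n * c = c by rw [hε3, one_mul]]
    _ = (1 + 3 * ε + ε ^ 2) * (ε * n * c) := by
        rw_mod_cast [hcard]
        ring

/-- The welfare bound for 0-instances in the `SA ∪ SM` hardness construction.  Items are
`M = R × [c]` (columns `R × {j}`).  The sets `S_ℓ ⊆ [c]` have size at most `εc` and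
satisfy the scattering property of the hard column sets; `X_1, …, X_n ⊆ [z]` are
pairwise disjoint and nonempty; the `f_i : 2^R → ℝ≥0` are monotone with `f_i(∅) = 0` and
form a 0-instance of the gap welfare problem (every partial allocation among a subset
`T` of bidders has welfare at most `(|T|+1)/λ`).  With
`v_i(A) = λ·max_{ℓ∈X_i} Σ_{j∈S_ℓ} f_i(A ∩ (R×{j}))` and
`u_j(A) = εn·1[A ⊇ R×{j}]`, every allocation of pairwise disjoint subsets of `M` to the
`n` `V`-type bidders and `c` single-minded bidders has total welfare at most
`(1 + 3ε + ε²)·εnc`. -/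
theorem zero_instance_welfare_bound
    (n c z : ℕ) (hn : 2 ≤ n) (hc : 1 ≤ c) (hz : 1 ≤ z)
    (ε : ℝ) (hε : ε = (n : ℝ) ^ (-(1 / 3) : ℝ)) (hε3 : ε ^ 3 * n = 1)
    {R : Type*} [Fintype R] [DecidableEq R]
    (S : Fin z → Finset (Fin c))
    (hScard : ∀ ℓ, ((S ℓ).card : ℝ) ≤ ε * c)
    (hS : ∀ (T : Finset (Fin c)) (L : Finset (Fin z)), L.card = n →
      (∑ ℓ ∈ L, ((T ∩ S ℓ).card : ℝ)) ≤ ((T.card : ℝ) / c + 3 * ε) * (ε * n * c))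
    (X : Fin n → Finset (Fin z))
    (hXdisj : ∀ i j, i ≠ j → Disjoint (X i) (X j))
    (hXne : ∀ i, (X i).Nonempty)
    (lam : ℝ) (hlam : 1 ≤ lam)
    (f : Fin n → Finset R → ℝ)
    (hf0 : ∀ i, f i ∅ = 0)
    (hfnn : ∀ i A, 0 ≤ f i A)
    (hfmono : ∀ i (A B : Finset R), A ⊆ B → f i A ≤ f i B)
    (hgap : ∀ (T : Finset (Fin n)) (B : Fin n → Finset R),
      (∀ i ∈ T, ∀ j ∈ T, i ≠ j → Disjoint (B i) (B j)) →
      ∑ i ∈ T, f i (B i) ≤ ((T.card : ℝ) + 1) / lam)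
    (A : Fin n → Finset (R × Fin c)) (A' : Fin c → Finset (R × Fin c))
    (hAA : ∀ i j, i ≠ j → Disjoint (A i) (A j))
    (hA'A' : ∀ i j, i ≠ j → Disjoint (A' i) (A' j))
    (hAA' : ∀ i j, Disjoint (A i) (A' j)) :
    (∑ i : Fin n, lam * (X i).sup' (hXne i) (fun ℓ =>
        ∑ j ∈ S ℓ, f i (((A i).filter (fun x => x.2 = j)).image Prod.fst))) +
      (∑ j : Fin c, ε * n *
        (if (Finset.univ.image (fun r : R => (r, j))) ⊆ A' j then (1 : ℝ) else 0)) ≤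
    (1 + 3 * ε + ε ^ 2) * (ε * n * c) :=
  zero_instance_welfare_bound_general n c z hc ε hε3 S hS X hXdisj hXne lam hlam f hf0 hgap A A' hAA
    hAA'
end
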